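/- arXiv:1201.5035 — 2 statements merged into one kernel-verified Lean document; each statement's English description precedes it below -/
import Mathlib

section
/- Let G and H be locally compact Hausdorff topological groups acting freely and properly by automorphisms on the left and right, respectively, of a topological groupoid Γ, and suppose the two actions commute (t·(x·h) = (t·x)·h for all t ∈ G, x ∈ Γ, h ∈ H). Then the space Γ is an equivalence between the semidirect-product groupoid (Γ/H)⋊G and the semidirect-product groupoid H⋉(G\Γ). That is: (1) (Γ/H)⋊G acts freely and properly on the left of the space Γ by (xH, t)·y = x(t·y) whenever s(x) = r(t·y), with fibre map ρ(y) = (r(y)H, e); (2) H⋉(G\Γ) acts freely and properly on the right of the space Γ by y·(h, G·z) = (y·h)z whenever s(y·h) = r(z), with fibre map σ(y) = (e, G·s(y)); (3) these two actions commute; (4) ρ factors through a homeomorphism of the orbit space Γ/(H⋉(G\Γ)) onto (Γ⁰/H)×{e}; (5) σ factors through a homeomorphism of the orbit space ((Γ/H)⋊G)\Γ onto {e}×(G\Γ⁰). -/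
open MeasureTheory Filter Topology

/-- A topological groupoid: a space `Γ` with a set of units, continuous open range and
source maps onto the units, a (partially meaningful, totalized) continuous multiplication
defined for composable pairs, and a continuous inversion. -/
structure TopGroupoid (Γ : Type*) [TopologicalSpace Γ] where
  unit : Set Γ
  rng : Γ → Γ
  src : Γ → Γ
  mul : Γ → Γ → Γ
  inv : Γ → Γ
  rng_mem : ∀ x, rng x ∈ unit
  src_mem : ∀ x, src x ∈ unit
  rng_unit : ∀ u ∈ unit, rng u = u
  src_unit : ∀ u ∈ unit, src u = u
  continuous_rng : Continuous rng
  continuous_src : Continuous src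
  open_rng : ∀ U : Set Γ, IsOpen U → ∃ V : Set Γ, IsOpen V ∧ rng '' U = V ∩ unit
  open_src : ∀ U : Set Γ, IsOpen U → ∃ V : Set Γ, IsOpen V ∧ src '' U = V ∩ unit
  continuous_mul : ContinuousOn (fun p : Γ × Γ => mul p.1 p.2) {p : Γ × Γ | src p.1 = rng p.2}
  continuous_inv : Continuous inv
  rng_mul : ∀ x y, src x = rng y → rng (mul x y) = rng x
  src_mul : ∀ x y, src x = rng y → src (mul x y) = src y
  mul_assoc' : ∀ x y z, src x = rng y → src y = rng z → mul (mul x y) z = mul x (mul y z)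
  rng_mul_self : ∀ x, mul (rng x) x = x
  mul_src_self : ∀ x, mul x (src x) = x
  inv_inv' : ∀ x, inv (inv x) = x
  src_inv : ∀ x, src (inv x) = rng x
  rng_inv : ∀ x, rng (inv x) = src x
  inv_mul' : ∀ x, mul (inv x) x = src x
  mul_inv' : ∀ x, mul x (inv x) = rng x

section Actions

variable {Γ : Type*} [TopologicalSpace Γ]

/-- A (continuous) right action of a group `H` on a topological groupoid by automorphisms. -/
structure GroupRightAction (𝒢 : TopGroupoid Γ) (H : Type*) [TopologicalSpace H] [Group H] where
  act : Γ → H → Γ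
  continuous_act : Continuous fun p : Γ × H => act p.1 p.2
  act_one : ∀ x, act x 1 = x
  act_mul : ∀ x (h k : H), act (act x h) k = act x (h * k)
  unit_act : ∀ u ∈ 𝒢.unit, ∀ h : H, act u h ∈ 𝒢.unit
  src_act : ∀ x h, 𝒢.src (act x h) = act (𝒢.src x) h
  rng_act : ∀ x h, 𝒢.rng (act x h) = act (𝒢.rng x) h
  mul_act : ∀ x y h, 𝒢.src x = 𝒢.rng y → 𝒢.mul (act x h) (act y h) = act (𝒢.mul x y) h
  inv_act : ∀ x h, 𝒢.inv (act x h) = act (𝒢.inv x) h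

namespace GroupRightAction

variable {𝒢 : TopGroupoid Γ} {H : Type*} [TopologicalSpace H] [Group H]

/-- The action is free. -/
def Free (A : GroupRightAction 𝒢 H) : Prop := ∀ x h, A.act x h = x → h = 1

/-- The action is proper: `(x,h) ↦ (x·h, x)` has compact preimages of compact sets. -/
def Proper (A : GroupRightAction 𝒢 H) : Prop :=
  ∀ K : Set (Γ × Γ), IsCompact K → IsCompact {p : Γ × H | (A.act p.1 p.2, p.1) ∈ K}

/-- The orbit equivalence relation. -/
def setoid (A : GroupRightAction 𝒢 H) : Setoid Γ where
  r x y := ∃ h : H, A.act x h = y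
  iseqv := by
    refine ⟨fun x => ⟨1, A.act_one x⟩, ?_, ?_⟩
    · rintro x y ⟨h, rfl⟩
      exact ⟨h⁻¹, by rw [A.act_mul]; simp [A.act_one]⟩
    · rintro x y z ⟨h, rfl⟩ ⟨k, rfl⟩
      exact ⟨h * k, (A.act_mul x h k).symm⟩

end GroupRightAction

/-- A (continuous) left action of a group `G` on a topological groupoid by automorphisms. -/
structure GroupLeftAction (𝒢 : TopGroupoid Γ) (G : Type*) [TopologicalSpace G] [Group G] where
  act : G → Γ → Γ
  continuous_act : Continuous fun p : G × Γ => act p.1 p.2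
  one_act : ∀ x, act 1 x = x
  act_act : ∀ (t u : G) (x : Γ), act t (act u x) = act (t * u) x
  unit_act : ∀ u ∈ 𝒢.unit, ∀ t : G, act t u ∈ 𝒢.unit
  src_act : ∀ t x, 𝒢.src (act t x) = act t (𝒢.src x)
  rng_act : ∀ t x, 𝒢.rng (act t x) = act t (𝒢.rng x)
  mul_act : ∀ t x y, 𝒢.src x = 𝒢.rng y → 𝒢.mul (act t x) (act t y) = act t (𝒢.mul x y)
  inv_act : ∀ t x, 𝒢.inv (act t x) = act t (𝒢.inv x)

namespace GroupLeftAction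

variable {𝒢 : TopGroupoid Γ} {G : Type*} [TopologicalSpace G] [Group G]

/-- The action is free. -/
def Free (A : GroupLeftAction 𝒢 G) : Prop := ∀ t x, A.act t x = x → t = 1

/-- The action is proper: `(t,x) ↦ (t·x, x)` has compact preimages of compact sets. -/
def Proper (A : GroupLeftAction 𝒢 G) : Prop :=
  ∀ K : Set (Γ × Γ), IsCompact K → IsCompact {p : G × Γ | (A.act p.1 p.2, p.2) ∈ K}

/-- The orbit equivalence relation. -/
def setoid (A : GroupLeftAction 𝒢 G) : Setoid Γ where
  r x y := ∃ t : G, A.act t x = y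
  iseqv := by
    refine ⟨fun x => ⟨1, A.one_act x⟩, ?_, ?_⟩
    · rintro x y ⟨t, rfl⟩
      exact ⟨t⁻¹, by rw [A.act_act]; simp [A.one_act]⟩
    · rintro x y z ⟨t, rfl⟩ ⟨u, rfl⟩
      exact ⟨u * t, (A.act_act u t x).symm⟩

end GroupLeftAction

/-- A left action of a topological groupoid `𝒢` on a space `Ω`, with fibre map `ρ`. -/
structure GroupoidLeftAction (𝒢 : TopGroupoid Γ) (Ω : Type*) [TopologicalSpace Ω] where
  ρ : Ω → Γ
  act : Γ → Ω → Ω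
  ρ_mem : ∀ u, ρ u ∈ 𝒢.unit
  continuous_ρ : Continuous ρ
  ρ_surj : ∀ v ∈ 𝒢.unit, ∃ u, ρ u = v
  open_ρ : ∀ U : Set Ω, IsOpen U → ∃ V : Set Γ, IsOpen V ∧ ρ '' U = V ∩ 𝒢.unit
  continuous_act : ContinuousOn (fun p : Γ × Ω => act p.1 p.2) {p : Γ × Ω | 𝒢.src p.1 = ρ p.2}
  ρ_act : ∀ x u, 𝒢.src x = ρ u → ρ (act x u) = 𝒢.rng x
  unit_act : ∀ u, act (ρ u) u = u
  act_act : ∀ x y u, 𝒢.src y = ρ u → 𝒢.src x = 𝒢.rng y → act x (act y u) = act (𝒢.mul x y) u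

namespace GroupoidLeftAction

variable {𝒢 : TopGroupoid Γ} {Ω : Type*} [TopologicalSpace Ω]

/-- The action is free. -/
def Free (A : GroupoidLeftAction 𝒢 Ω) : Prop :=
  ∀ x u, 𝒢.src x = A.ρ u → A.act x u = u → x ∈ 𝒢.unit

/-- The action is proper: `(x,u) ↦ (x·u, u)` on the composable set has compact preimages of
compact sets. -/
def Proper (A : GroupoidLeftAction 𝒢 Ω) : Prop :=
  ∀ K : Set (Ω × Ω), IsCompact K →
    IsCompact {p : Γ × Ω | 𝒢.src p.1 = A.ρ p.2 ∧ (A.act p.1 p.2, p.2) ∈ K}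

/-- The orbit equivalence relation on `Ω`. -/
def setoid (A : GroupoidLeftAction 𝒢 Ω) : Setoid Ω where
  r u v := ∃ x, 𝒢.src x = A.ρ u ∧ A.act x u = v
  iseqv := by
    constructor
    · exact fun u => ⟨A.ρ u, 𝒢.src_unit _ (A.ρ_mem u), A.unit_act u⟩
    · rintro u v ⟨x, hx, rfl⟩
      refine ⟨𝒢.inv x, ?_, ?_⟩
      · rw [𝒢.src_inv, A.ρ_act x u hx]
      · rw [A.act_act _ x u hx (𝒢.src_inv x), 𝒢.inv_mul', hx, A.unit_act]
    · rintro u v w ⟨x, hx, rfl⟩ ⟨y, hy, rfl⟩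
      have hyr : 𝒢.src y = 𝒢.rng x := by rw [hy, A.ρ_act x u hx]
      refine ⟨𝒢.mul y x, ?_, ?_⟩
      · rw [𝒢.src_mul y x hyr, hx]
      · rw [← A.act_act y x u hx hyr]

end GroupoidLeftAction

/-- A right action of a topological groupoid `𝒢` on a space `Ω`, with fibre map `σ`. -/
structure GroupoidRightAction (𝒢 : TopGroupoid Γ) (Ω : Type*) [TopologicalSpace Ω] where
  σ : Ω → Γ
  act : Ω → Γ → Ω
  σ_mem : ∀ u, σ u ∈ 𝒢.unit
  continuous_σ : Continuous σ
  σ_surj : ∀ v ∈ 𝒢.unit, ∃ u, σ u = v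
  open_σ : ∀ U : Set Ω, IsOpen U → ∃ V : Set Γ, IsOpen V ∧ σ '' U = V ∩ 𝒢.unit
  continuous_act : ContinuousOn (fun p : Ω × Γ => act p.1 p.2) {p : Ω × Γ | σ p.1 = 𝒢.rng p.2}
  σ_act : ∀ u x, σ u = 𝒢.rng x → σ (act u x) = 𝒢.src x
  unit_act : ∀ u, act u (σ u) = u
  act_act : ∀ u x y, σ u = 𝒢.rng x → 𝒢.src x = 𝒢.rng y → act (act u x) y = act u (𝒢.mul x y)

namespace GroupoidRightAction

variable {𝒢 : TopGroupoid Γ} {Ω : Type*} [TopologicalSpace Ω]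

/-- The action is free. -/
def Free (A : GroupoidRightAction 𝒢 Ω) : Prop :=
  ∀ u x, A.σ u = 𝒢.rng x → A.act u x = u → x ∈ 𝒢.unit

/-- The action is proper. -/
def Proper (A : GroupoidRightAction 𝒢 Ω) : Prop :=
  ∀ K : Set (Ω × Ω), IsCompact K →
    IsCompact {p : Ω × Γ | A.σ p.1 = 𝒢.rng p.2 ∧ (A.act p.1 p.2, p.1) ∈ K}

/-- The orbit equivalence relation on `Ω`. -/
def setoid (A : GroupoidRightAction 𝒢 Ω) : Setoid Ω where
  r u v := ∃ x, A.σ u = 𝒢.rng x ∧ A.act u x = v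
  iseqv := by
    constructor
    · exact fun u => ⟨A.σ u, (𝒢.rng_unit _ (A.σ_mem u)).symm, A.unit_act u⟩
    · rintro u v ⟨x, hx, rfl⟩
      refine ⟨𝒢.inv x, ?_, ?_⟩
      · rw [𝒢.rng_inv, A.σ_act u x hx]
      · rw [A.act_act u x _ hx (𝒢.rng_inv x).symm, 𝒢.mul_inv', ← hx, A.unit_act]
    · rintro u v w ⟨x, hx, rfl⟩ ⟨y, hy, rfl⟩
      have hxy : 𝒢.src x = 𝒢.rng y := by rw [← A.σ_act u x hx, hy]
      refine ⟨𝒢.mul x y, ?_, ?_⟩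
      · rw [𝒢.rng_mul x y hxy, hx]
      · rw [A.act_act u x y hx hxy]

end GroupoidRightAction

end Actions

/-- A left Haar system on a topological groupoid: a family of Radon measures indexed by the
units, with support `r⁻¹(u)`, continuous in `u`, and left invariant. -/
def IsHaarSystem {Γ : Type*} [TopologicalSpace Γ] [MeasurableSpace Γ]
    (𝒢 : TopGroupoid Γ) (lam : Γ → Measure Γ) : Prop :=
  (∀ u ∈ 𝒢.unit, ∀ K : Set Γ, IsCompact K → lam u K < ⊤) ∧
  (∀ u ∈ 𝒢.unit, lam u {x | 𝒢.rng x ≠ u} = 0) ∧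
  (∀ u ∈ 𝒢.unit, ∀ V : Set Γ, IsOpen V → (V ∩ 𝒢.rng ⁻¹' {u}).Nonempty → 0 < lam u V) ∧
  (∀ f : Γ → ℝ, Continuous f → HasCompactSupport f →
    ContinuousOn (fun u => ∫ x, f x ∂(lam u)) 𝒢.unit) ∧
  (∀ x : Γ, ∀ f : Γ → ℝ, Continuous f → HasCompactSupport f →
    ∫ y, f (𝒢.mul x y) ∂(lam (𝒢.src x)) = ∫ y, f y ∂(lam (𝒢.rng x)))

/-!
The action of `(xH, t)` on `y` is `x (t · y)` for the representative `x` of `xH` with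
`s(x) = r(t · y)`: one exists because the two group actions commute, and it is unique because `H`
acts freely. Through the open quotient map `Γ → Γ/H`, continuity of this action reduces to
continuity of the translation `(u, u · h) ↦ h`, which holds because for a free proper action the
map `(u, h) ↦ (u · h, u)` is a closed embedding. Properness comes from compactness of
`{(x, t, y) | (x (t · y), y) ∈ K}`: there `t` moves `s(y)` between two compact sets and
`x = (x (t · y)) (t · y)⁻¹`. Every `y` lies in the same `(Γ/H)⋊G`-orbit as `s(y)`, and two units
lie in the same orbit iff they lie in the same `G`-orbit, so the orbit space is `G\Γ⁰`. The right
action is handled symmetrically.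
-/

open Set Function

lemma Topology.IsOpenQuotientMap.continuousOn_iff {X Y Z : Type*} [TopologicalSpace X]
    [TopologicalSpace Y] [TopologicalSpace Z] {q : X → Y} (hq : IsOpenQuotientMap q)
    {f : Y → Z} {s : Set Y} : ContinuousOn f s ↔ ContinuousOn (f ∘ q) (q ⁻¹' s) := by
  simp only [continuousOn_iff_continuous_domRestrict,
    (hq.restrictPreimage s).isQuotientMap.continuous_iff]
  rfl

lemma isOpenQuotientMap_quotientMk {X ι : Type*} [TopologicalSpace X] {S : Setoid X}
    (f : ι → X → X) (hf : ∀ i, Continuous (f i)) (hS : ∀ a b, S a b ↔ ∃ i, f i a = b) :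
    IsOpenQuotientMap (Quotient.mk S) := by
  refine ⟨Quotient.mk_surjective, continuous_quot_mk, fun U hU => ?_⟩
  have hsat : Quotient.mk S ⁻¹' (Quotient.mk S '' U) = ⋃ i, f i ⁻¹' U := by
    ext x
    rw [mem_iUnion]
    constructor
    · rintro ⟨u, hu, hux⟩
      obtain ⟨i, rfl⟩ := (hS x u).1 (Quotient.exact hux.symm)
      exact ⟨i, hu⟩
    · rintro ⟨i, hi⟩
      exact ⟨f i x, hi, Quotient.sound (Setoid.symm ((hS x _).2 ⟨i, rfl⟩))⟩
  exact isQuotientMap_quot_mk.isOpen_preimage.mp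
    (hsat ▸ isOpen_iUnion fun i => hU.preimage (hf i))

lemma preimage_image_quotientMk {X : Type*} {S : Setoid X} {E : Set X}
    (hE : ∀ a b, S a b → a ∈ E → b ∈ E) : Quotient.mk S ⁻¹' (Quotient.mk S '' E) = E := by
  refine Subset.antisymm ?_ (subset_preimage_image _ _)
  rintro x ⟨u, hu, hux⟩
  exact hE u x (Quotient.exact hux) hu

lemma exists_quotient_homeomorph {X Z : Type*} [TopologicalSpace X] [TopologicalSpace Z]
    (S : Setoid X) (f : X → Z) (hf : Continuous f) (hfS : ∀ a b, S a b → f a = f b)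
    (g : Z → Quotient S) (hg : Continuous g) (hgf : ∀ x, g (f x) = Quotient.mk S x)
    (hfg : ∀ z, ∃ x, g z = Quotient.mk S x ∧ f x = z) :
    ∃ φ : Quotient S ≃ₜ Z, ∀ x, φ (Quotient.mk S x) = f x :=
  ⟨{ toFun := Quotient.lift f hfS
     invFun := g
     left_inv := Quotient.ind hgf
     right_inv := fun z => by obtain ⟨x, hx, rfl⟩ := hfg z; rw [hx]; rfl
     continuous_toFun := hf.quotient_lift hfS
     continuous_invFun := hg }, fun _ => rfl⟩

lemma continuousOn_invFun_of_proper {X Y : Type*} [TopologicalSpace X] [T2Space X]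
    [LocallyCompactSpace X] [TopologicalSpace Y] [Nonempty Y] (e : X → Y → X)
    (he : Continuous fun p : X × Y => e p.1 p.2) (hinj : ∀ u, Injective (e u))
    (hproper : ∀ K, IsCompact K → IsCompact {p : X × Y | (e p.1 p.2, p.1) ∈ K}) :
    ContinuousOn (fun p : X × X => invFun (e p.1) p.2) {p | p.2 ∈ range (e p.1)} := by
  set Φ : X × Y → X × X := fun p => (e p.1 p.2, p.1)
  have hΦc : Continuous Φ := he.prodMk continuous_fst
  have hΦ : IsClosedEmbedding Φ := by
    refine .of_continuous_injective_isClosedMap hΦc ?_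
      (isProperMap_iff_isCompact_preimage.2 ⟨hΦc, fun K hK => hproper K hK⟩).isClosedMap
    rintro ⟨u, x⟩ ⟨u', x'⟩ h
    simp only [Φ, Prod.mk.injEq] at h
    obtain ⟨hx, rfl⟩ := h
    rw [hinj u hx]
  rw [continuousOn_iff_continuous_domRestrict]
  have hsec : Continuous fun p : {p : X × X | p.2 ∈ range (e p.1)} =>
      (p.1.1, invFun (e p.1.1) p.1.2) := by
    refine hΦ.isEmbedding.continuous_iff.2 ?_
    have : Φ ∘ (fun p : {p : X × X | p.2 ∈ range (e p.1)} => (p.1.1, invFun (e p.1.1) p.1.2))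
        = fun p => (p.1.2, p.1.1) := funext fun p => by simp [Φ, invFun_eq p.2]
    rw [this]
    fun_prop
  exact continuous_snd.comp hsec

namespace TopGroupoid

variable {Γ : Type*} [TopologicalSpace Γ] (𝒢 : TopGroupoid Γ)

def composable : Set (Γ × Γ) := {p | 𝒢.src p.1 = 𝒢.rng p.2}

lemma mul_mul_inv_cancel {a c : Γ} (h : 𝒢.src a = 𝒢.rng c) :
    𝒢.mul (𝒢.mul a c) (𝒢.inv c) = a := by
  rw [𝒢.mul_assoc' a c (𝒢.inv c) h (𝒢.rng_inv c).symm, 𝒢.mul_inv', ← h, 𝒢.mul_src_self]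

lemma inv_mul_mul_cancel {a c : Γ} (h : 𝒢.src a = 𝒢.rng c) :
    𝒢.mul (𝒢.inv a) (𝒢.mul a c) = c := by
  rw [← 𝒢.mul_assoc' (𝒢.inv a) a c (𝒢.src_inv a) h, 𝒢.inv_mul', h, 𝒢.rng_mul_self]

lemma isClosed_composable [T2Space Γ] : IsClosed 𝒢.composable :=
  isClosed_eq (𝒢.continuous_src.comp continuous_fst) (𝒢.continuous_rng.comp continuous_snd)

lemma isCompact_image_mul [T2Space Γ] {A B : Set Γ} (hA : IsCompact A) (hB : IsCompact B) :
    IsCompact ((fun p : Γ × Γ => 𝒢.mul p.1 p.2) '' (A ×ˢ B ∩ 𝒢.composable)) :=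
  ((hA.prod hB).inter_right 𝒢.isClosed_composable).image_of_continuousOn
    (𝒢.continuous_mul.mono inter_subset_right)

lemma exists_isOpen_image_comp_eq {Y : Type*} [TopologicalSpace Y] {f : Γ → Γ}
    (hf : ∀ U : Set Γ, IsOpen U → ∃ V : Set Γ, IsOpen V ∧ f '' U = V ∩ 𝒢.unit)
    {q : Γ → Y} (hq : IsOpenMap q) (hsat : q ⁻¹' (q '' 𝒢.unit) = 𝒢.unit)
    {U : Set Γ} (hU : IsOpen U) : ∃ V : Set Y, IsOpen V ∧ (q ∘ f) '' U = V ∩ q '' 𝒢.unit := by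
  obtain ⟨V, hV, hfU⟩ := hf U hU
  refine ⟨q '' V, hq V hV, ?_⟩
  rw [image_comp, hfU, ← image_inter_preimage, hsat]

end TopGroupoid

namespace GroupRightAction

variable {Γ H : Type*} [TopologicalSpace Γ] [TopologicalSpace H] [Group H] {𝒢 : TopGroupoid Γ}
  (A : GroupRightAction 𝒢 H)

lemma act_inv_eq_iff {x y : Γ} {h : H} : A.act x h⁻¹ = y ↔ x = A.act y h := by
  constructor
  · rintro rfl; rw [A.act_mul, inv_mul_cancel, A.act_one]
  · rintro rfl; rw [A.act_mul, mul_inv_cancel, A.act_one]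

lemma mk_act (x : Γ) (h : H) : Quotient.mk A.setoid (A.act x h) = Quotient.mk A.setoid x :=
  Quotient.sound ⟨h⁻¹, (A.act_inv_eq_iff).2 rfl⟩

lemma isOpenQuotientMap_mk : IsOpenQuotientMap (Quotient.mk A.setoid) :=
  isOpenQuotientMap_quotientMk (fun h x => A.act x h)
    (fun _ => A.continuous_act.comp (continuous_id.prodMk continuous_const)) fun _ _ => Iff.rfl

lemma preimage_image_mk_unit :
    Quotient.mk A.setoid ⁻¹' (Quotient.mk A.setoid '' 𝒢.unit) = 𝒢.unit :=
  preimage_image_quotientMk fun _ _ ⟨h, hh⟩ hu => hh ▸ A.unit_act _ hu h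

lemma act_injective (hA : A.Free) (x : Γ) : Injective (A.act x) := fun h k hhk => by
  have := hA (A.act x h) (h⁻¹ * k) (by rw [A.act_mul, mul_inv_cancel_left, hhk])
  rwa [inv_mul_eq_one] at this

lemma eq_of_mk_eq_of_src_eq (hA : A.Free) {x y : Γ}
    (hmk : Quotient.mk A.setoid x = Quotient.mk A.setoid y) (hs : 𝒢.src x = 𝒢.src y) :
    x = y := by
  obtain ⟨h, rfl⟩ := Quotient.exact hmk
  rw [A.src_act] at hs
  rw [hA _ h hs.symm, A.act_one]

lemma isCompact_transporter (hA : A.Proper) {B C : Set Γ} (hB : IsCompact B)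
    (hC : IsCompact C) : IsCompact {h : H | ∃ u ∈ B, A.act u h ∈ C} := by
  convert (hA _ (hC.prod hB)).image continuous_snd using 1
  ext h
  simp only [mem_ofPred_eq, mem_image, mem_prod, Prod.exists, exists_eq_right]
  exact ⟨fun ⟨u, hu, hh⟩ => ⟨u, hh, hu⟩, fun ⟨u, hh, hu⟩ => ⟨u, hu, hh⟩⟩

lemma isCompact_setOf_mul_act_mem [T2Space Γ] (hA : A.Proper) {K : Set (Γ × Γ)}
    (hK : IsCompact K) :
    IsCompact {q : Γ × (H × Γ) | 𝒢.src (A.act q.1 q.2.1) = 𝒢.rng q.2.2 ∧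
      (𝒢.mul (A.act q.1 q.2.1) q.2.2, q.1) ∈ K} := by
  have hK₁ : IsCompact (Prod.fst '' K) := hK.image continuous_fst
  have hK₂ : IsCompact (Prod.snd '' K) := hK.image continuous_snd
  -- `h` carries `r(y) ∈ r(K₂)` into `r(K₁)`, and `z = (y · h)⁻¹ ((y · h) z)`
  set T := {h : H | ∃ u ∈ 𝒢.rng '' (Prod.snd '' K), A.act u h ∈ 𝒢.rng '' (Prod.fst '' K)}
  have hT : IsCompact T :=
    A.isCompact_transporter hA (hK₂.image 𝒢.continuous_rng) (hK₁.image 𝒢.continuous_rng)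
  set M := (fun p : Γ × H => A.act p.1 p.2) '' ((Prod.snd '' K) ×ˢ T)
  have hM : IsCompact M := (hK₂.prod hT).image A.continuous_act
  set Z := (fun p : Γ × Γ => 𝒢.mul p.1 p.2) '' ((𝒢.inv '' M) ×ˢ (Prod.fst '' K) ∩ 𝒢.composable)
  have hZ : IsCompact Z := 𝒢.isCompact_image_mul (hM.image 𝒢.continuous_inv) hK₁
  have hyh : Continuous fun q : Γ × (H × Γ) => A.act q.1 q.2.1 :=
    A.continuous_act.comp (continuous_fst.prodMk (continuous_fst.comp continuous_snd))
  have hpair : Continuous fun q : Γ × (H × Γ) => (A.act q.1 q.2.1, q.2.2) :=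
    hyh.prodMk (continuous_snd.comp continuous_snd)
  have hclosed : IsClosed {q : Γ × (H × Γ) | 𝒢.src (A.act q.1 q.2.1) = 𝒢.rng q.2.2 ∧
      (𝒢.mul (A.act q.1 q.2.1) q.2.2, q.1) ∈ K} :=
    ((𝒢.continuous_mul.comp hpair.continuousOn fun _ h => h).prodMk
      continuous_fst.continuousOn).preimage_isClosed_of_isClosed
      (𝒢.isClosed_composable.preimage hpair) hK.isClosed
  refine (hK₂.prod (hT.prod hZ)).of_isClosed_subset hclosed ?_
  rintro ⟨y, h, z⟩ ⟨hyz : 𝒢.src (A.act y h) = 𝒢.rng z, hmem⟩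
  have hy : y ∈ Prod.snd '' K := ⟨_, hmem, rfl⟩
  have hw : 𝒢.mul (A.act y h) z ∈ Prod.fst '' K := ⟨_, hmem, rfl⟩
  have hh : h ∈ T := ⟨𝒢.rng y, ⟨y, hy, rfl⟩, _, hw, by rw [𝒢.rng_mul _ _ hyz, A.rng_act]⟩
  have hcomp : 𝒢.src (𝒢.inv (A.act y h)) = 𝒢.rng (𝒢.mul (A.act y h) z) := by
    rw [𝒢.src_inv, 𝒢.rng_mul _ _ hyz]
  have hz : z ∈ Z :=
    ⟨(_, _), ⟨⟨⟨_, ⟨(y, h), ⟨hy, hh⟩, rfl⟩, rfl⟩, hw⟩, hcomp⟩, 𝒢.inv_mul_mul_cancel hyz⟩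
  exact ⟨hy, hh, hz⟩

end GroupRightAction

namespace GroupLeftAction

variable {Γ G : Type*} [TopologicalSpace Γ] [TopologicalSpace G] [Group G] {𝒢 : TopGroupoid Γ}
  (A : GroupLeftAction 𝒢 G)

lemma act_inv_eq_iff {x y : Γ} {t : G} : A.act t⁻¹ x = y ↔ x = A.act t y := by
  constructor
  · rintro rfl; rw [A.act_act, mul_inv_cancel, A.one_act]
  · rintro rfl; rw [A.act_act, inv_mul_cancel, A.one_act]

lemma mk_act (t : G) (x : Γ) : Quotient.mk A.setoid (A.act t x) = Quotient.mk A.setoid x :=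
  Quotient.sound ⟨t⁻¹, (A.act_inv_eq_iff).2 rfl⟩

lemma isOpenQuotientMap_mk : IsOpenQuotientMap (Quotient.mk A.setoid) :=
  isOpenQuotientMap_quotientMk A.act
    (fun _ => A.continuous_act.comp (continuous_const.prodMk continuous_id)) fun _ _ => Iff.rfl

lemma preimage_image_mk_unit :
    Quotient.mk A.setoid ⁻¹' (Quotient.mk A.setoid '' 𝒢.unit) = 𝒢.unit :=
  preimage_image_quotientMk fun _ _ ⟨t, ht⟩ hu => ht ▸ A.unit_act _ hu t

lemma act_injective (hA : A.Free) (x : Γ) : Injective fun t : G => A.act t x :=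
  fun t s (hts : A.act t x = A.act s x) => by
  have := hA (s⁻¹ * t) x (by rw [← A.act_act, hts, A.act_act, inv_mul_cancel, A.one_act])
  rwa [inv_mul_eq_one, eq_comm] at this

lemma eq_of_mk_eq_of_rng_eq (hA : A.Free) {x y : Γ}
    (hmk : Quotient.mk A.setoid x = Quotient.mk A.setoid y) (hr : 𝒢.rng x = 𝒢.rng y) :
    x = y := by
  obtain ⟨t, rfl⟩ := Quotient.exact hmk
  rw [A.rng_act] at hr
  rw [hA t _ hr.symm, A.one_act]

lemma isCompact_transporter (hA : A.Proper) {B C : Set Γ} (hB : IsCompact B)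
    (hC : IsCompact C) : IsCompact {t : G | ∃ u ∈ B, A.act t u ∈ C} := by
  convert (hA _ (hC.prod hB)).image continuous_fst using 1
  ext t
  simp only [mem_ofPred_eq, mem_image, mem_prod, Prod.exists, exists_and_right, exists_eq_right]
  exact ⟨fun ⟨u, hu, ht⟩ => ⟨u, ht, hu⟩, fun ⟨u, ht, hu⟩ => ⟨u, hu, ht⟩⟩

lemma isCompact_setOf_act_swap_mem (hA : A.Proper) {K : Set (Γ × Γ)} (hK : IsCompact K) :
    IsCompact {p : Γ × G | (A.act p.2 p.1, p.1) ∈ K} :=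
  (Homeomorph.prodComm Γ G).isCompact_preimage.2 (hA K hK)

lemma isCompact_setOf_mul_act_mem [T2Space Γ] (hA : A.Proper) {K : Set (Γ × Γ)}
    (hK : IsCompact K) :
    IsCompact {q : (Γ × G) × Γ | 𝒢.src q.1.1 = 𝒢.rng (A.act q.1.2 q.2) ∧
      (𝒢.mul q.1.1 (A.act q.1.2 q.2), q.2) ∈ K} := by
  have hK₁ : IsCompact (Prod.fst '' K) := hK.image continuous_fst
  have hK₂ : IsCompact (Prod.snd '' K) := hK.image continuous_snd
  -- `t` carries `s(y) ∈ s(K₂)` into `s(K₁)`, and `x = (x (t · y)) (t · y)⁻¹`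
  set T := {t : G | ∃ u ∈ 𝒢.src '' (Prod.snd '' K), A.act t u ∈ 𝒢.src '' (Prod.fst '' K)}
  have hT : IsCompact T :=
    A.isCompact_transporter hA (hK₂.image 𝒢.continuous_src) (hK₁.image 𝒢.continuous_src)
  set M := (fun p : G × Γ => A.act p.1 p.2) '' (T ×ˢ (Prod.snd '' K))
  have hM : IsCompact M := (hT.prod hK₂).image A.continuous_act
  set X := (fun p : Γ × Γ => 𝒢.mul p.1 p.2) '' ((Prod.fst '' K) ×ˢ (𝒢.inv '' M) ∩ 𝒢.composable)
  have hX : IsCompact X := 𝒢.isCompact_image_mul hK₁ (hM.image 𝒢.continuous_inv)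
  have hty : Continuous fun q : (Γ × G) × Γ => A.act q.1.2 q.2 :=
    A.continuous_act.comp ((continuous_snd.comp continuous_fst).prodMk continuous_snd)
  have hpair : Continuous fun q : (Γ × G) × Γ => (q.1.1, A.act q.1.2 q.2) :=
    (continuous_fst.comp continuous_fst).prodMk hty
  have hclosed : IsClosed {q : (Γ × G) × Γ | 𝒢.src q.1.1 = 𝒢.rng (A.act q.1.2 q.2) ∧
      (𝒢.mul q.1.1 (A.act q.1.2 q.2), q.2) ∈ K} :=
    ((𝒢.continuous_mul.comp hpair.continuousOn fun _ h => h).prodMk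
      continuous_snd.continuousOn).preimage_isClosed_of_isClosed
      (𝒢.isClosed_composable.preimage hpair) hK.isClosed
  refine ((hX.prod hT).prod hK₂).of_isClosed_subset hclosed ?_
  rintro ⟨⟨x, t⟩, y⟩ ⟨hxy : 𝒢.src x = 𝒢.rng (A.act t y), hmem⟩
  have hy : y ∈ Prod.snd '' K := ⟨_, hmem, rfl⟩
  have hw : 𝒢.mul x (A.act t y) ∈ Prod.fst '' K := ⟨_, hmem, rfl⟩
  have ht : t ∈ T := ⟨𝒢.src y, ⟨y, hy, rfl⟩, _, hw, by rw [𝒢.src_mul _ _ hxy, A.src_act]⟩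
  have hcomp : 𝒢.src (𝒢.mul x (A.act t y)) = 𝒢.rng (𝒢.inv (A.act t y)) := by
    rw [𝒢.src_mul _ _ hxy, 𝒢.rng_inv]
  have hx : x ∈ X :=
    ⟨(_, _), ⟨⟨hw, _, ⟨(t, y), ⟨ht, hy⟩, rfl⟩, rfl⟩, hcomp⟩, 𝒢.mul_mul_inv_cancel hxy⟩
  exact ⟨⟨hx, ht⟩, hy⟩

end GroupLeftAction

section SemidirectAct

variable {Γ G H : Type*} [TopologicalSpace Γ] [TopologicalSpace G] [Group G]
  [TopologicalSpace H] [Group H] {𝒢 : TopGroupoid Γ}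

def ActionsCommute (LA : GroupLeftAction 𝒢 G) (RA : GroupRightAction 𝒢 H) : Prop :=
  ∀ (t : G) (x : Γ) (h : H), LA.act t (RA.act x h) = RA.act (LA.act t x) h

/-- `𝒮` is the semidirect-product groupoid `(Γ/H)⋊G`. -/
structure IsLeftSemidirect (LA : GroupLeftAction 𝒢 G) (RA : GroupRightAction 𝒢 H)
    (𝒮 : TopGroupoid (Quotient RA.setoid × G)) : Prop where
  unit_eq : 𝒮.unit = (Quotient.mk RA.setoid '' 𝒢.unit) ×ˢ ({1} : Set G)
  rng_mk : ∀ (x : Γ) (t : G),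
    𝒮.rng (Quotient.mk RA.setoid x, t) = (Quotient.mk RA.setoid (𝒢.rng x), 1)
  src_mk : ∀ (x : Γ) (t : G),
    𝒮.src (Quotient.mk RA.setoid x, t) = (Quotient.mk RA.setoid (LA.act t⁻¹ (𝒢.src x)), 1)
  mul_mk : ∀ (x y : Γ) (s t : G), 𝒢.src x = 𝒢.rng (LA.act s y) →
    𝒮.mul (Quotient.mk RA.setoid x, s) (Quotient.mk RA.setoid y, t)
      = (Quotient.mk RA.setoid (𝒢.mul x (LA.act s y)), s * t)

/-- `𝒮` is the semidirect-product groupoid `H⋉(G\Γ)`. -/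
structure IsRightSemidirect (LA : GroupLeftAction 𝒢 G) (RA : GroupRightAction 𝒢 H)
    (𝒮 : TopGroupoid (H × Quotient LA.setoid)) : Prop where
  unit_eq : 𝒮.unit = ({1} : Set H) ×ˢ (Quotient.mk LA.setoid '' 𝒢.unit)
  rng_mk : ∀ (h : H) (x : Γ),
    𝒮.rng (h, Quotient.mk LA.setoid x) = (1, Quotient.mk LA.setoid (RA.act (𝒢.rng x) h⁻¹))
  src_mk : ∀ (h : H) (x : Γ),
    𝒮.src (h, Quotient.mk LA.setoid x) = (1, Quotient.mk LA.setoid (𝒢.src x))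
  mul_mk : ∀ (s t : H) (x y : Γ), 𝒢.src (RA.act x t) = 𝒢.rng y →
    𝒮.mul (s, Quotient.mk LA.setoid x) (t, Quotient.mk LA.setoid y)
      = (s * t, Quotient.mk LA.setoid (𝒢.mul (RA.act x t) y))

open Classical in
/-- `(xH, t) · y = x (t · y)`, with `x` the representative satisfying `s(x) = r(t · y)`
(unique when the `H`-action is free); the junk value `y` if there is none. -/
noncomputable def semidirectLeftAct (LA : GroupLeftAction 𝒢 G) (RA : GroupRightAction 𝒢 H)
    (p : Quotient RA.setoid × G) (y : Γ) : Γ :=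
  if hx : ∃ x, Quotient.mk RA.setoid x = p.1 ∧ 𝒢.src x = 𝒢.rng (LA.act p.2 y)
  then 𝒢.mul hx.choose (LA.act p.2 y) else y

open Classical in
/-- `y · (h, G z) = (y · h) z`, with `z` the representative satisfying `s(y · h) = r(z)`
(unique when the `G`-action is free); the junk value `y` if there is none. -/
noncomputable def semidirectRightAct (LA : GroupLeftAction 𝒢 G) (RA : GroupRightAction 𝒢 H)
    (y : Γ) (p : H × Quotient LA.setoid) : Γ :=
  if hz : ∃ z, Quotient.mk LA.setoid z = p.2 ∧ 𝒢.src (RA.act y p.1) = 𝒢.rng z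
  then 𝒢.mul (RA.act y p.1) hz.choose else y

variable {LA : GroupLeftAction 𝒢 G} {RA : GroupRightAction 𝒢 H}

lemma semidirectLeftAct_mk (hRfree : RA.Free) {x y : Γ} {t : G}
    (h : 𝒢.src x = 𝒢.rng (LA.act t y)) :
    semidirectLeftAct LA RA (Quotient.mk RA.setoid x, t) y = 𝒢.mul x (LA.act t y) := by
  have hex : ∃ x', Quotient.mk RA.setoid x' = Quotient.mk RA.setoid x ∧
      𝒢.src x' = 𝒢.rng (LA.act t y) := ⟨x, rfl, h⟩
  simp only [semidirectLeftAct]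
  rw [dif_pos hex]
  obtain ⟨hmk, hs⟩ := hex.choose_spec
  rw [RA.eq_of_mk_eq_of_src_eq hRfree hmk (hs.trans h.symm)]

lemma semidirectRightAct_mk (hLfree : LA.Free) {y z : Γ} {h : H}
    (hyz : 𝒢.src (RA.act y h) = 𝒢.rng z) :
    semidirectRightAct LA RA y (h, Quotient.mk LA.setoid z) = 𝒢.mul (RA.act y h) z := by
  have hex : ∃ z', Quotient.mk LA.setoid z' = Quotient.mk LA.setoid z ∧
      𝒢.src (RA.act y h) = 𝒢.rng z' := ⟨z, rfl, hyz⟩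
  simp only [semidirectRightAct]
  rw [dif_pos hex]
  obtain ⟨hmk, hr⟩ := hex.choose_spec
  rw [LA.eq_of_mk_eq_of_rng_eq hLfree hmk (hr.symm.trans hyz)]

lemma semidirectRightAct_semidirectLeftAct (hLfree : LA.Free) (hRfree : RA.Free)
    (hcomm : ActionsCommute LA RA) {x y z : Γ} {t : G} {h : H}
    (hxy : 𝒢.src x = 𝒢.rng (LA.act t y)) (hyz : 𝒢.src (RA.act y h) = 𝒢.rng z) :
    semidirectRightAct LA RA (semidirectLeftAct LA RA (Quotient.mk RA.setoid x, t) y)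
        (h, Quotient.mk LA.setoid z)
      = semidirectLeftAct LA RA (Quotient.mk RA.setoid x, t)
        (semidirectRightAct LA RA y (h, Quotient.mk LA.setoid z)) := by
  -- both sides are `(x · h) (t · (y · h)) (t · z)`
  have h₁ : 𝒢.src (RA.act x h) = 𝒢.rng (LA.act t (RA.act y h)) := by
    rw [RA.src_act, hxy, ← RA.rng_act, ← hcomm]
  have h₂ : 𝒢.src (LA.act t (RA.act y h)) = 𝒢.rng (LA.act t z) := by
    rw [LA.src_act, hyz, LA.rng_act]
  have h₃ : 𝒢.src (RA.act (𝒢.mul x (LA.act t y)) h) = 𝒢.rng (LA.act t z) := by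
    rw [← RA.mul_act _ _ _ hxy, ← hcomm, 𝒢.src_mul _ _ h₁, h₂]
  have h₄ : 𝒢.src (RA.act x h) = 𝒢.rng (LA.act t (𝒢.mul (RA.act y h) z)) := by
    rw [← LA.mul_act _ _ _ hyz, 𝒢.rng_mul _ _ h₂, h₁]
  rw [semidirectLeftAct_mk hRfree hxy, semidirectRightAct_mk hLfree hyz, ← LA.mk_act t z,
    ← RA.mk_act x h, semidirectRightAct_mk hLfree h₃, semidirectLeftAct_mk hRfree h₄,
    ← RA.mul_act _ _ _ hxy, ← hcomm, 𝒢.mul_assoc' _ _ _ h₁ h₂, LA.mul_act t _ _ hyz]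

end SemidirectAct

section LeftSemidirect

variable {Γ G H : Type*} [TopologicalSpace Γ] [TopologicalSpace G] [Group G]
  [TopologicalSpace H] [Group H] {𝒢 : TopGroupoid Γ}
  {LA : GroupLeftAction 𝒢 G} {RA : GroupRightAction 𝒢 H}
  {𝒮 : TopGroupoid (Quotient RA.setoid × G)}

namespace IsLeftSemidirect

lemma src_mk_eq_iff (h𝒮 : IsLeftSemidirect LA RA 𝒮) (hcomm : ActionsCommute LA RA) {x y : Γ}
    {t : G} : 𝒮.src (Quotient.mk RA.setoid x, t) = (Quotient.mk RA.setoid (𝒢.rng y), 1) ↔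
      ∃ k, RA.act (𝒢.src x) k = 𝒢.rng (LA.act t y) := by
  rw [h𝒮.src_mk, Prod.mk.injEq, and_iff_left rfl, Quotient.eq]
  refine exists_congr fun k => ?_
  rw [← hcomm, LA.act_inv_eq_iff, LA.rng_act]

lemma exists_rep_of_src_eq (h𝒮 : IsLeftSemidirect LA RA 𝒮) (hcomm : ActionsCommute LA RA)
    {c : Quotient RA.setoid} {t : G} {y : Γ}
    (h : 𝒮.src (c, t) = (Quotient.mk RA.setoid (𝒢.rng y), 1)) :
    ∃ x, Quotient.mk RA.setoid x = c ∧ 𝒢.src x = 𝒢.rng (LA.act t y) := by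
  obtain ⟨x, rfl⟩ := Quotient.mk_surjective c
  obtain ⟨k, hk⟩ := (h𝒮.src_mk_eq_iff hcomm).1 h
  exact ⟨RA.act x k, RA.mk_act x k, by rw [RA.src_act, hk]⟩

lemma src_mk_of_src_eq (h𝒮 : IsLeftSemidirect LA RA 𝒮) {x y : Γ} {t : G}
    (h : 𝒢.src x = 𝒢.rng (LA.act t y)) :
    𝒮.src (Quotient.mk RA.setoid x, t) = (Quotient.mk RA.setoid (𝒢.rng y), 1) := by
  rw [h𝒮.src_mk, h, LA.rng_act, LA.act_act, inv_mul_cancel, LA.one_act]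

lemma exists_isOpen_image_eq (h𝒮 : IsLeftSemidirect LA RA 𝒮) {U : Set Γ} (hU : IsOpen U) :
    ∃ V, IsOpen V ∧
      (fun y => (Quotient.mk RA.setoid (𝒢.rng y), (1 : G))) '' U = V ∩ 𝒮.unit := by
  obtain ⟨V, hV, hVU⟩ := 𝒢.exists_isOpen_image_comp_eq 𝒢.open_rng
    RA.isOpenQuotientMap_mk.isOpenMap RA.preimage_image_mk_unit hU
  refine ⟨V ×ˢ univ, hV.prod isOpen_univ, ?_⟩
  rw [h𝒮.unit_eq, prod_inter_prod, univ_inter, ← hVU, prod_singleton, ← image_comp]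
  rfl

lemma rng_semidirectLeftAct (h𝒮 : IsLeftSemidirect LA RA 𝒮) (hRfree : RA.Free)
    (hcomm : ActionsCommute LA RA) {p : Quotient RA.setoid × G} {y : Γ}
    (h : 𝒮.src p = (Quotient.mk RA.setoid (𝒢.rng y), 1)) :
    (Quotient.mk RA.setoid (𝒢.rng (semidirectLeftAct LA RA p y)), (1 : G)) = 𝒮.rng p := by
  obtain ⟨c, t⟩ := p
  obtain ⟨x, rfl, hx⟩ := h𝒮.exists_rep_of_src_eq hcomm h
  rw [semidirectLeftAct_mk hRfree hx, h𝒮.rng_mk, 𝒢.rng_mul _ _ hx]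

lemma semidirectLeftAct_semidirectLeftAct (h𝒮 : IsLeftSemidirect LA RA 𝒮) (hRfree : RA.Free)
    (hcomm : ActionsCommute LA RA) {p q : Quotient RA.setoid × G} {z : Γ}
    (hq : 𝒮.src q = (Quotient.mk RA.setoid (𝒢.rng z), 1)) (hpq : 𝒮.src p = 𝒮.rng q) :
    semidirectLeftAct LA RA p (semidirectLeftAct LA RA q z)
      = semidirectLeftAct LA RA (𝒮.mul p q) z := by
  obtain ⟨c, s⟩ := p
  obtain ⟨d, t⟩ := q
  obtain ⟨y, rfl, hy⟩ := h𝒮.exists_rep_of_src_eq hcomm hq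
  rw [h𝒮.rng_mk] at hpq
  obtain ⟨x, rfl, hx⟩ := h𝒮.exists_rep_of_src_eq hcomm hpq
  have hsy : 𝒢.src (LA.act s y) = 𝒢.rng (LA.act (s * t) z) := by
    rw [LA.src_act, hy, LA.rng_act, LA.rng_act, LA.act_act]
  have hsyz : LA.act s (𝒢.mul y (LA.act t z)) = 𝒢.mul (LA.act s y) (LA.act (s * t) z) := by
    rw [← LA.mul_act s _ _ hy, LA.act_act]
  have hx' : 𝒢.src x = 𝒢.rng (LA.act s (𝒢.mul y (LA.act t z))) := by
    rw [hsyz, 𝒢.rng_mul _ _ hsy]; exact hx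
  have hxy : 𝒢.src (𝒢.mul x (LA.act s y)) = 𝒢.rng (LA.act (s * t) z) := by
    rw [𝒢.src_mul _ _ hx, hsy]
  rw [semidirectLeftAct_mk hRfree hy, semidirectLeftAct_mk hRfree hx', h𝒮.mul_mk x y s _ hx,
    semidirectLeftAct_mk hRfree hxy, hsyz, 𝒢.mul_assoc' _ _ _ hx hsy]

lemma continuousOn_semidirectLeftAct [T2Space Γ] [LocallyCompactSpace Γ]
    (h𝒮 : IsLeftSemidirect LA RA 𝒮) (hRfree : RA.Free) (hRproper : RA.Proper)
    (hcomm : ActionsCommute LA RA) :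
    ContinuousOn (fun p : (Quotient RA.setoid × G) × Γ => semidirectLeftAct LA RA p.1 p.2)
      {p | 𝒮.src p.1 = (Quotient.mk RA.setoid (𝒢.rng p.2), 1)} := by
  set Q : (Γ × G) × Γ → (Quotient RA.setoid × G) × Γ :=
    fun q => ((Quotient.mk RA.setoid q.1.1, q.1.2), q.2)
  have hQ : IsOpenQuotientMap Q := (RA.isOpenQuotientMap_mk.prodMap .id).prodMap .id
  set D := {p : (Quotient RA.setoid × G) × Γ | 𝒮.src p.1 = (Quotient.mk RA.setoid (𝒢.rng p.2), 1)}
  rw [hQ.continuousOn_iff]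
  -- on a representative `x`, the action is `(x · τ(s x, r(t · y))) (t · y)`
  set τ : Γ × Γ → H := fun p => invFun (RA.act p.1) p.2
  have hτ : ContinuousOn τ {p | p.2 ∈ range (RA.act p.1)} :=
    continuousOn_invFun_of_proper RA.act RA.continuous_act (RA.act_injective hRfree) hRproper
  set ends : (Γ × G) × Γ → Γ × Γ := fun q => (𝒢.src q.1.1, 𝒢.rng (LA.act q.1.2 q.2))
  have hmaps : MapsTo ends (Q ⁻¹' D) {p | p.2 ∈ range (RA.act p.1)} :=
    fun q hq => (h𝒮.src_mk_eq_iff hcomm).1 hq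
  have hty : Continuous fun q : (Γ × G) × Γ => LA.act q.1.2 q.2 :=
    LA.continuous_act.comp ((continuous_snd.comp continuous_fst).prodMk continuous_snd)
  have hends : Continuous ends :=
    (𝒢.continuous_src.comp (continuous_fst.comp continuous_fst)).prodMk
      (𝒢.continuous_rng.comp hty)
  have hsrc : ∀ q ∈ Q ⁻¹' D,
      𝒢.src (RA.act q.1.1 (τ (ends q))) = 𝒢.rng (LA.act q.1.2 q.2) := fun q hq => by
    rw [RA.src_act]; exact invFun_eq (hmaps hq)
  have hrep : ContinuousOn (fun q => RA.act q.1.1 (τ (ends q))) (Q ⁻¹' D) :=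
    RA.continuous_act.comp_continuousOn
      ((continuous_fst.comp continuous_fst).continuousOn.prodMk
        (hτ.comp hends.continuousOn hmaps))
  refine (𝒢.continuous_mul.comp (hrep.prodMk hty.continuousOn) hsrc).congr fun q hq => ?_
  change semidirectLeftAct LA RA (Quotient.mk RA.setoid q.1.1, q.1.2) q.2 = _
  rw [← RA.mk_act q.1.1 (τ (ends q)), semidirectLeftAct_mk hRfree (hsrc q hq)]
  rfl

end IsLeftSemidirect

variable [T2Space Γ] [LocallyCompactSpace Γ]

noncomputable def semidirectLeftAction (h𝒮 : IsLeftSemidirect LA RA 𝒮) (hRfree : RA.Free)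
    (hRproper : RA.Proper) (hcomm : ActionsCommute LA RA) : GroupoidLeftAction 𝒮 Γ where
  ρ y := (Quotient.mk RA.setoid (𝒢.rng y), 1)
  act := semidirectLeftAct LA RA
  ρ_mem y := h𝒮.unit_eq ▸ ⟨⟨𝒢.rng y, 𝒢.rng_mem y, rfl⟩, rfl⟩
  continuous_ρ := (continuous_quot_mk.comp 𝒢.continuous_rng).prodMk continuous_const
  ρ_surj v hv := by
    rw [h𝒮.unit_eq] at hv
    obtain ⟨⟨u, hu, hv₁⟩, hv₂⟩ := hv
    exact ⟨u, Prod.ext (by rw [𝒢.rng_unit u hu, hv₁]) hv₂.symm⟩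
  open_ρ _ hU := h𝒮.exists_isOpen_image_eq hU
  continuous_act := h𝒮.continuousOn_semidirectLeftAct hRfree hRproper hcomm
  ρ_act _ _ h := h𝒮.rng_semidirectLeftAct hRfree hcomm h
  unit_act y := by
    have h1 : 𝒢.src (𝒢.rng y) = 𝒢.rng (LA.act 1 y) := by
      rw [LA.one_act, 𝒢.src_unit _ (𝒢.rng_mem y)]
    rw [semidirectLeftAct_mk hRfree h1, LA.one_act, 𝒢.rng_mul_self]
  act_act _ _ _ hq hpq := h𝒮.semidirectLeftAct_semidirectLeftAct hRfree hcomm hq hpq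

namespace IsLeftSemidirect

lemma semidirectLeftAction_free (h𝒮 : IsLeftSemidirect LA RA 𝒮) (hLfree : LA.Free)
    (hRfree : RA.Free) (hRproper : RA.Proper) (hcomm : ActionsCommute LA RA) :
    (semidirectLeftAction h𝒮 hRfree hRproper hcomm).Free := by
  rintro ⟨c, t⟩ z hp (hact : semidirectLeftAct LA RA (c, t) z = z)
  obtain ⟨x, rfl, hx⟩ := h𝒮.exists_rep_of_src_eq hcomm hp
  rw [semidirectLeftAct_mk hRfree hx] at hact
  obtain rfl : t = 1 := hLfree t (𝒢.src z) (by
    conv_rhs => rw [← hact, 𝒢.src_mul _ _ hx, LA.src_act])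
  rw [LA.one_act] at hact hx
  have hxz : x = 𝒢.rng z := by rw [← 𝒢.mul_mul_inv_cancel hx, hact, 𝒢.mul_inv']
  rw [h𝒮.unit_eq, hxz]
  exact ⟨⟨𝒢.rng z, 𝒢.rng_mem z, rfl⟩, rfl⟩

lemma semidirectLeftAction_proper (h𝒮 : IsLeftSemidirect LA RA 𝒮) (hLproper : LA.Proper)
    (hRfree : RA.Free) (hRproper : RA.Proper) (hcomm : ActionsCommute LA RA) :
    (semidirectLeftAction h𝒮 hRfree hRproper hcomm).Proper := by
  intro K hK
  convert (LA.isCompact_setOf_mul_act_mem hLproper hK).image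
    (((RA.isOpenQuotientMap_mk.continuous.comp (continuous_fst.comp continuous_fst)).prodMk
      (continuous_snd.comp continuous_fst)).prodMk continuous_snd) using 1
  ext ⟨⟨c, t⟩, y⟩
  constructor
  · rintro ⟨hc, hmem⟩
    obtain ⟨x, rfl, hx⟩ := h𝒮.exists_rep_of_src_eq hcomm hc
    change (semidirectLeftAct LA RA (Quotient.mk RA.setoid x, t) y, y) ∈ K at hmem
    rw [semidirectLeftAct_mk hRfree hx] at hmem
    exact ⟨((x, t), y), ⟨hx, hmem⟩, rfl⟩
  · rintro ⟨⟨⟨x, t⟩, y⟩, ⟨hx : 𝒢.src x = 𝒢.rng (LA.act t y), hmem⟩, h⟩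
    change ((Quotient.mk RA.setoid x, t), y) = _ at h
    cases h
    refine ⟨h𝒮.src_mk_of_src_eq hx, ?_⟩
    change (semidirectLeftAct LA RA (Quotient.mk RA.setoid x, t) y, y) ∈ K
    rwa [semidirectLeftAct_mk hRfree hx]

lemma semidirectLeftAction_setoid_act (h𝒮 : IsLeftSemidirect LA RA 𝒮) (hRfree : RA.Free)
    (hRproper : RA.Proper) (hcomm : ActionsCommute LA RA) (t : G) (y : Γ) :
    (semidirectLeftAction h𝒮 hRfree hRproper hcomm).setoid y (LA.act t y) := by
  have hr : 𝒢.src (𝒢.rng (LA.act t y)) = 𝒢.rng (LA.act t y) := 𝒢.src_unit _ (𝒢.rng_mem _)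
  refine ⟨(Quotient.mk RA.setoid (𝒢.rng (LA.act t y)), t), h𝒮.src_mk_of_src_eq hr, ?_⟩
  change semidirectLeftAct LA RA _ y = _
  rw [semidirectLeftAct_mk hRfree hr, 𝒢.rng_mul_self]

lemma semidirectLeftAction_setoid_src (h𝒮 : IsLeftSemidirect LA RA 𝒮) (hRfree : RA.Free)
    (hRproper : RA.Proper) (hcomm : ActionsCommute LA RA) (y : Γ) :
    (semidirectLeftAction h𝒮 hRfree hRproper hcomm).setoid y (𝒢.src y) := by
  have hs : 𝒢.src (𝒢.inv y) = 𝒢.rng (LA.act 1 y) := by rw [LA.one_act, 𝒢.src_inv]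
  refine ⟨(Quotient.mk RA.setoid (𝒢.inv y), 1), h𝒮.src_mk_of_src_eq hs, ?_⟩
  change semidirectLeftAct LA RA _ y = _
  rw [semidirectLeftAct_mk hRfree hs, LA.one_act, 𝒢.inv_mul']

lemma mk_src_eq_of_semidirectLeftAction_setoid (h𝒮 : IsLeftSemidirect LA RA 𝒮)
    (hRfree : RA.Free) (hRproper : RA.Proper) (hcomm : ActionsCommute LA RA) {a b : Γ}
    (hab : (semidirectLeftAction h𝒮 hRfree hRproper hcomm).setoid a b) :
    Quotient.mk LA.setoid (𝒢.src a) = Quotient.mk LA.setoid (𝒢.src b) := by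
  obtain ⟨⟨c, t⟩, hc, (rfl : semidirectLeftAct LA RA (c, t) a = b)⟩ := hab
  obtain ⟨x, rfl, hx⟩ := h𝒮.exists_rep_of_src_eq hcomm hc
  rw [semidirectLeftAct_mk hRfree hx, 𝒢.src_mul _ _ hx, LA.src_act, LA.mk_act]

lemma exists_homeomorph_orbit_semidirectLeftAction (h𝒮 : IsLeftSemidirect LA RA 𝒮)
    (hRfree : RA.Free) (hRproper : RA.Proper) (hcomm : ActionsCommute LA RA) :
    ∃ ψ : Quotient (semidirectLeftAction h𝒮 hRfree hRproper hcomm).setoid ≃ₜ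
        {p : H × Quotient LA.setoid // p.1 = 1 ∧ p.2 ∈ Quotient.mk LA.setoid '' 𝒢.unit},
      ∀ y : Γ, (ψ (Quotient.mk _ y)).val = (1, Quotient.mk LA.setoid (𝒢.src y)) := by
  set S := (semidirectLeftAction h𝒮 hRfree hRproper hcomm).setoid
  have hresp : ∀ a b, LA.setoid a b → Quotient.mk S a = Quotient.mk S b := by
    rintro a b ⟨t, rfl⟩
    exact Quotient.sound (h𝒮.semidirectLeftAction_setoid_act hRfree hRproper hcomm t a)
  obtain ⟨ψ, hψ⟩ := exists_quotient_homeomorph S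
    (Z := {p : H × Quotient LA.setoid // p.1 = 1 ∧ p.2 ∈ Quotient.mk LA.setoid '' 𝒢.unit})
    (fun y => ⟨(1, Quotient.mk LA.setoid (𝒢.src y)), rfl, 𝒢.src y, 𝒢.src_mem y, rfl⟩)
    (Continuous.subtype_mk (continuous_const.prodMk
      (continuous_quot_mk.comp 𝒢.continuous_src)) _)
    (fun a b hab => Subtype.ext (Prod.ext rfl
      (h𝒮.mk_src_eq_of_semidirectLeftAction_setoid hRfree hRproper hcomm hab)))
    (fun p => Quotient.lift (Quotient.mk S) hresp p.val.2)
    ((continuous_quot_mk.quotient_lift hresp).comp (continuous_snd.comp continuous_subtype_val))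
    (fun y => (Quotient.sound (h𝒮.semidirectLeftAction_setoid_src hRfree hRproper hcomm y)).symm)
    (by
      intro p
      obtain ⟨u, hu, hup⟩ := p.2.2
      refine ⟨u, by rw [← hup]; rfl, Subtype.ext (Prod.ext p.2.1.symm ?_)⟩
      change Quotient.mk LA.setoid (𝒢.src u) = _
      rw [𝒢.src_unit u hu, hup])
  exact ⟨ψ, fun y => congrArg Subtype.val (hψ y)⟩

end IsLeftSemidirect

end LeftSemidirect

section RightSemidirect

variable {Γ G H : Type*} [TopologicalSpace Γ] [TopologicalSpace G] [Group G]
  [TopologicalSpace H] [Group H] {𝒢 : TopGroupoid Γ}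
  {LA : GroupLeftAction 𝒢 G} {RA : GroupRightAction 𝒢 H}
  {𝒮 : TopGroupoid (H × Quotient LA.setoid)}

namespace IsRightSemidirect

lemma rng_mk_eq_iff (h𝒮 : IsRightSemidirect LA RA 𝒮) (hcomm : ActionsCommute LA RA) {y z : Γ}
    {h : H} : (1, Quotient.mk LA.setoid (𝒢.src y)) = 𝒮.rng (h, Quotient.mk LA.setoid z) ↔
      ∃ t, LA.act t (𝒢.rng z) = 𝒢.src (RA.act y h) := by
  rw [h𝒮.rng_mk, Prod.mk.injEq, and_iff_right rfl, eq_comm, Quotient.eq]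
  refine exists_congr fun t => ?_
  rw [hcomm, RA.act_inv_eq_iff, RA.src_act]

lemma exists_rep_of_rng_eq (h𝒮 : IsRightSemidirect LA RA 𝒮) (hcomm : ActionsCommute LA RA)
    {y : Γ} {h : H} {d : Quotient LA.setoid}
    (hd : (1, Quotient.mk LA.setoid (𝒢.src y)) = 𝒮.rng (h, d)) :
    ∃ z, Quotient.mk LA.setoid z = d ∧ 𝒢.src (RA.act y h) = 𝒢.rng z := by
  obtain ⟨z, rfl⟩ := Quotient.mk_surjective d
  obtain ⟨t, ht⟩ := (h𝒮.rng_mk_eq_iff hcomm).1 hd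
  exact ⟨LA.act t z, LA.mk_act t z, by rw [LA.rng_act, ht]⟩

lemma rng_mk_of_src_eq (h𝒮 : IsRightSemidirect LA RA 𝒮) {y z : Γ} {h : H}
    (hyz : 𝒢.src (RA.act y h) = 𝒢.rng z) :
    (1, Quotient.mk LA.setoid (𝒢.src y)) = 𝒮.rng (h, Quotient.mk LA.setoid z) := by
  rw [h𝒮.rng_mk, ← hyz, RA.src_act, RA.act_inv_eq_iff.2 rfl]

lemma exists_isOpen_image_eq (h𝒮 : IsRightSemidirect LA RA 𝒮) {U : Set Γ} (hU : IsOpen U) :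
    ∃ V, IsOpen V ∧
      (fun y => ((1 : H), Quotient.mk LA.setoid (𝒢.src y))) '' U = V ∩ 𝒮.unit := by
  obtain ⟨V, hV, hVU⟩ := 𝒢.exists_isOpen_image_comp_eq 𝒢.open_src
    LA.isOpenQuotientMap_mk.isOpenMap LA.preimage_image_mk_unit hU
  refine ⟨univ ×ˢ V, isOpen_univ.prod hV, ?_⟩
  rw [h𝒮.unit_eq, prod_inter_prod, univ_inter, ← hVU, singleton_prod, ← image_comp]
  rfl

lemma src_semidirectRightAct (h𝒮 : IsRightSemidirect LA RA 𝒮) (hLfree : LA.Free)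
    (hcomm : ActionsCommute LA RA) {y : Γ} {p : H × Quotient LA.setoid}
    (hp : (1, Quotient.mk LA.setoid (𝒢.src y)) = 𝒮.rng p) :
    (1, Quotient.mk LA.setoid (𝒢.src (semidirectRightAct LA RA y p))) = 𝒮.src p := by
  obtain ⟨h, d⟩ := p
  obtain ⟨z, rfl, hz⟩ := h𝒮.exists_rep_of_rng_eq hcomm hp
  rw [semidirectRightAct_mk hLfree hz, h𝒮.src_mk, 𝒢.src_mul _ _ hz]

lemma semidirectRightAct_semidirectRightAct (h𝒮 : IsRightSemidirect LA RA 𝒮)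
    (hLfree : LA.Free) (hcomm : ActionsCommute LA RA) {y : Γ} {p q : H × Quotient LA.setoid}
    (hp : (1, Quotient.mk LA.setoid (𝒢.src y)) = 𝒮.rng p) (hpq : 𝒮.src p = 𝒮.rng q) :
    semidirectRightAct LA RA (semidirectRightAct LA RA y p) q
      = semidirectRightAct LA RA y (𝒮.mul p q) := by
  obtain ⟨s, d⟩ := p
  obtain ⟨t, e⟩ := q
  obtain ⟨z, rfl, hz⟩ := h𝒮.exists_rep_of_rng_eq hcomm hp
  rw [h𝒮.src_mk] at hpq
  obtain ⟨w, rfl, hw⟩ := h𝒮.exists_rep_of_rng_eq hcomm hpq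
  have hyz : 𝒢.src (RA.act y (s * t)) = 𝒢.rng (RA.act z t) := by
    rw [← RA.act_mul, RA.src_act, hz, RA.rng_act]
  have hyzt : RA.act (𝒢.mul (RA.act y s) z) t = 𝒢.mul (RA.act y (s * t)) (RA.act z t) := by
    rw [← RA.mul_act _ _ _ hz, RA.act_mul]
  have hw' : 𝒢.src (RA.act (𝒢.mul (RA.act y s) z) t) = 𝒢.rng w := by
    rw [RA.src_act, 𝒢.src_mul _ _ hz, ← RA.src_act, hw]
  have hy' : 𝒢.src (RA.act y (s * t)) = 𝒢.rng (𝒢.mul (RA.act z t) w) := by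
    rw [𝒢.rng_mul _ _ hw, hyz]
  rw [semidirectRightAct_mk hLfree hz, semidirectRightAct_mk hLfree hw', h𝒮.mul_mk s t z w hw,
    semidirectRightAct_mk hLfree hy', hyzt, 𝒢.mul_assoc' _ _ _ hyz hw]

lemma continuousOn_semidirectRightAct [T2Space Γ] [LocallyCompactSpace Γ]
    (h𝒮 : IsRightSemidirect LA RA 𝒮) (hLfree : LA.Free) (hLproper : LA.Proper)
    (hcomm : ActionsCommute LA RA) :
    ContinuousOn (fun p : Γ × (H × Quotient LA.setoid) => semidirectRightAct LA RA p.1 p.2)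
      {p | (1, Quotient.mk LA.setoid (𝒢.src p.1)) = 𝒮.rng p.2} := by
  set Q : Γ × (H × Γ) → Γ × (H × Quotient LA.setoid) :=
    fun q => (q.1, (q.2.1, Quotient.mk LA.setoid q.2.2))
  have hQ : IsOpenQuotientMap Q := IsOpenQuotientMap.id.prodMap
    (IsOpenQuotientMap.id.prodMap LA.isOpenQuotientMap_mk)
  set D := {p : Γ × (H × Quotient LA.setoid) | (1, Quotient.mk LA.setoid (𝒢.src p.1)) = 𝒮.rng p.2}
  rw [hQ.continuousOn_iff]
  -- on a representative `z`, the action is `(y · h) (τ(r z, s(y · h)) · z)`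
  set τ : Γ × Γ → G := fun p => invFun (fun t => LA.act t p.1) p.2
  have hτ : ContinuousOn τ {p | p.2 ∈ range (fun t => LA.act t p.1)} :=
    continuousOn_invFun_of_proper (fun u t => LA.act t u)
      (LA.continuous_act.comp continuous_swap) (LA.act_injective hLfree)
      fun _ => LA.isCompact_setOf_act_swap_mem hLproper
  set ends : Γ × (H × Γ) → Γ × Γ := fun q => (𝒢.rng q.2.2, 𝒢.src (RA.act q.1 q.2.1))
  have hmaps : MapsTo ends (Q ⁻¹' D) {p | p.2 ∈ range (fun t => LA.act t p.1)} :=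
    fun q hq => (h𝒮.rng_mk_eq_iff hcomm).1 hq
  have hyh : Continuous fun q : Γ × (H × Γ) => RA.act q.1 q.2.1 :=
    RA.continuous_act.comp (continuous_fst.prodMk (continuous_fst.comp continuous_snd))
  have hends : Continuous ends :=
    (𝒢.continuous_rng.comp (continuous_snd.comp continuous_snd)).prodMk
      (𝒢.continuous_src.comp hyh)
  have hsrc : ∀ q ∈ Q ⁻¹' D,
      𝒢.src (RA.act q.1 q.2.1) = 𝒢.rng (LA.act (τ (ends q)) q.2.2) := fun q hq => by
    rw [LA.rng_act]; exact (invFun_eq (hmaps hq)).symm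
  have hrep : ContinuousOn (fun q => LA.act (τ (ends q)) q.2.2) (Q ⁻¹' D) :=
    LA.continuous_act.comp_continuousOn ((hτ.comp hends.continuousOn hmaps).prodMk
      (continuous_snd.comp continuous_snd).continuousOn)
  refine (𝒢.continuous_mul.comp (hyh.continuousOn.prodMk hrep) hsrc).congr fun q hq => ?_
  change semidirectRightAct LA RA q.1 (q.2.1, Quotient.mk LA.setoid q.2.2) = _
  rw [← LA.mk_act (τ (ends q)) q.2.2, semidirectRightAct_mk hLfree (hsrc q hq)]
  rfl

end IsRightSemidirect

variable [T2Space Γ] [LocallyCompactSpace Γ]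

noncomputable def semidirectRightAction (h𝒮 : IsRightSemidirect LA RA 𝒮) (hLfree : LA.Free)
    (hLproper : LA.Proper) (hcomm : ActionsCommute LA RA) : GroupoidRightAction 𝒮 Γ where
  σ y := (1, Quotient.mk LA.setoid (𝒢.src y))
  act := semidirectRightAct LA RA
  σ_mem y := h𝒮.unit_eq ▸ ⟨rfl, 𝒢.src y, 𝒢.src_mem y, rfl⟩
  continuous_σ := continuous_const.prodMk (continuous_quot_mk.comp 𝒢.continuous_src)
  σ_surj v hv := by
    rw [h𝒮.unit_eq] at hv
    obtain ⟨hv₁, u, hu, hv₂⟩ := hv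
    exact ⟨u, Prod.ext hv₁.symm (by rw [𝒢.src_unit u hu, hv₂])⟩
  open_σ _ hU := h𝒮.exists_isOpen_image_eq hU
  continuous_act := h𝒮.continuousOn_semidirectRightAct hLfree hLproper hcomm
  σ_act _ _ h := h𝒮.src_semidirectRightAct hLfree hcomm h
  unit_act y := by
    have h1 : 𝒢.src (RA.act y 1) = 𝒢.rng (𝒢.src y) := by
      rw [RA.act_one, 𝒢.rng_unit _ (𝒢.src_mem y)]
    rw [semidirectRightAct_mk hLfree h1, RA.act_one, 𝒢.mul_src_self]
  act_act _ _ _ hp hpq := h𝒮.semidirectRightAct_semidirectRightAct hLfree hcomm hp hpq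

namespace IsRightSemidirect

lemma semidirectRightAction_free (h𝒮 : IsRightSemidirect LA RA 𝒮) (hRfree : RA.Free)
    (hLfree : LA.Free) (hLproper : LA.Proper) (hcomm : ActionsCommute LA RA) :
    (semidirectRightAction h𝒮 hLfree hLproper hcomm).Free := by
  rintro y ⟨h, d⟩ hp (hact : semidirectRightAct LA RA y (h, d) = y)
  obtain ⟨z, rfl, hz⟩ := h𝒮.exists_rep_of_rng_eq hcomm hp
  rw [semidirectRightAct_mk hLfree hz] at hact
  obtain rfl : h = 1 := hRfree (𝒢.rng y) h (by
    conv_rhs => rw [← hact, 𝒢.rng_mul _ _ hz, RA.rng_act])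
  rw [RA.act_one] at hact hz
  have hzy : z = 𝒢.src y := by rw [← 𝒢.inv_mul_mul_cancel hz, hact, 𝒢.inv_mul']
  rw [h𝒮.unit_eq, hzy]
  exact ⟨rfl, 𝒢.src y, 𝒢.src_mem y, rfl⟩

lemma semidirectRightAction_proper (h𝒮 : IsRightSemidirect LA RA 𝒮) (hRproper : RA.Proper)
    (hLfree : LA.Free) (hLproper : LA.Proper) (hcomm : ActionsCommute LA RA) :
    (semidirectRightAction h𝒮 hLfree hLproper hcomm).Proper := by
  intro K hK
  convert (RA.isCompact_setOf_mul_act_mem hRproper hK).image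
    (continuous_fst.prodMk ((continuous_fst.comp continuous_snd).prodMk
      (LA.isOpenQuotientMap_mk.continuous.comp (continuous_snd.comp continuous_snd)))) using 1
  ext ⟨y, h, d⟩
  constructor
  · rintro ⟨hd, hmem⟩
    obtain ⟨z, rfl, hz⟩ := h𝒮.exists_rep_of_rng_eq hcomm hd
    change (semidirectRightAct LA RA y (h, Quotient.mk LA.setoid z), y) ∈ K at hmem
    rw [semidirectRightAct_mk hLfree hz] at hmem
    exact ⟨(y, h, z), ⟨hz, hmem⟩, rfl⟩
  · rintro ⟨⟨y, h, z⟩, ⟨hz : 𝒢.src (RA.act y h) = 𝒢.rng z, hmem⟩, hq⟩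
    change (y, h, Quotient.mk LA.setoid z) = _ at hq
    cases hq
    refine ⟨h𝒮.rng_mk_of_src_eq hz, ?_⟩
    change (semidirectRightAct LA RA y (h, Quotient.mk LA.setoid z), y) ∈ K
    rwa [semidirectRightAct_mk hLfree hz]

lemma semidirectRightAction_setoid_act (h𝒮 : IsRightSemidirect LA RA 𝒮) (hLfree : LA.Free)
    (hLproper : LA.Proper) (hcomm : ActionsCommute LA RA) (y : Γ) (h : H) :
    (semidirectRightAction h𝒮 hLfree hLproper hcomm).setoid y (RA.act y h) := by
  have hs : 𝒢.src (RA.act y h) = 𝒢.rng (𝒢.src (RA.act y h)) :=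
    (𝒢.rng_unit _ (𝒢.src_mem _)).symm
  refine ⟨(h, Quotient.mk LA.setoid (𝒢.src (RA.act y h))), h𝒮.rng_mk_of_src_eq hs, ?_⟩
  change semidirectRightAct LA RA y _ = _
  rw [semidirectRightAct_mk hLfree hs, 𝒢.mul_src_self]

lemma semidirectRightAction_setoid_rng (h𝒮 : IsRightSemidirect LA RA 𝒮) (hLfree : LA.Free)
    (hLproper : LA.Proper) (hcomm : ActionsCommute LA RA) (y : Γ) :
    (semidirectRightAction h𝒮 hLfree hLproper hcomm).setoid y (𝒢.rng y) := by
  have hr : 𝒢.src (RA.act y 1) = 𝒢.rng (𝒢.inv y) := by rw [RA.act_one, 𝒢.rng_inv]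
  refine ⟨(1, Quotient.mk LA.setoid (𝒢.inv y)), h𝒮.rng_mk_of_src_eq hr, ?_⟩
  change semidirectRightAct LA RA y _ = _
  rw [semidirectRightAct_mk hLfree hr, RA.act_one, 𝒢.mul_inv']

lemma mk_rng_eq_of_semidirectRightAction_setoid (h𝒮 : IsRightSemidirect LA RA 𝒮)
    (hLfree : LA.Free) (hLproper : LA.Proper) (hcomm : ActionsCommute LA RA) {a b : Γ}
    (hab : (semidirectRightAction h𝒮 hLfree hLproper hcomm).setoid a b) :
    Quotient.mk RA.setoid (𝒢.rng a) = Quotient.mk RA.setoid (𝒢.rng b) := by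
  obtain ⟨⟨h, d⟩, hd, (rfl : semidirectRightAct LA RA a (h, d) = b)⟩ := hab
  obtain ⟨z, rfl, hz⟩ := h𝒮.exists_rep_of_rng_eq hcomm hd
  rw [semidirectRightAct_mk hLfree hz, 𝒢.rng_mul _ _ hz, RA.rng_act, RA.mk_act]

lemma exists_homeomorph_orbit_semidirectRightAction (h𝒮 : IsRightSemidirect LA RA 𝒮)
    (hLfree : LA.Free) (hLproper : LA.Proper) (hcomm : ActionsCommute LA RA) :
    ∃ φ : Quotient (semidirectRightAction h𝒮 hLfree hLproper hcomm).setoid ≃ₜ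
        {p : Quotient RA.setoid × G // p.1 ∈ Quotient.mk RA.setoid '' 𝒢.unit ∧ p.2 = 1},
      ∀ y : Γ, (φ (Quotient.mk _ y)).val = (Quotient.mk RA.setoid (𝒢.rng y), 1) := by
  set S := (semidirectRightAction h𝒮 hLfree hLproper hcomm).setoid
  have hresp : ∀ a b, RA.setoid a b → Quotient.mk S a = Quotient.mk S b := by
    rintro a b ⟨h, rfl⟩
    exact Quotient.sound (h𝒮.semidirectRightAction_setoid_act hLfree hLproper hcomm a h)
  obtain ⟨φ, hφ⟩ := exists_quotient_homeomorph S
    (Z := {p : Quotient RA.setoid × G // p.1 ∈ Quotient.mk RA.setoid '' 𝒢.unit ∧ p.2 = 1})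
    (fun y => ⟨(Quotient.mk RA.setoid (𝒢.rng y), 1), ⟨𝒢.rng y, 𝒢.rng_mem y, rfl⟩, rfl⟩)
    (Continuous.subtype_mk ((continuous_quot_mk.comp 𝒢.continuous_rng).prodMk
      continuous_const) _)
    (fun a b hab => Subtype.ext (Prod.ext
      (h𝒮.mk_rng_eq_of_semidirectRightAction_setoid hLfree hLproper hcomm hab) rfl))
    (fun p => Quotient.lift (Quotient.mk S) hresp p.val.1)
    ((continuous_quot_mk.quotient_lift hresp).comp (continuous_fst.comp continuous_subtype_val))
    (fun y => (Quotient.sound (h𝒮.semidirectRightAction_setoid_rng hLfree hLproper hcomm y)).symm)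
    (by
      intro p
      obtain ⟨u, hu, hup⟩ := p.2.1
      refine ⟨u, by rw [← hup]; rfl, Subtype.ext (Prod.ext ?_ p.2.2.symm)⟩
      change Quotient.mk RA.setoid (𝒢.rng u) = _
      rw [𝒢.rng_unit u hu, hup])
  exact ⟨φ, fun y => congrArg Subtype.val (hφ y)⟩

end IsRightSemidirect

end RightSemidirect

theorem symmetric_groupoid_equivalence_general
    {Γ G H : Type*} [TopologicalSpace Γ] [T2Space Γ] [LocallyCompactSpace Γ]
    [TopologicalSpace G] [Group G]
    [TopologicalSpace H] [Group H]
    (𝒢 : TopGroupoid Γ)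
    (LA : GroupLeftAction 𝒢 G) (RA : GroupRightAction 𝒢 H)
    (hLfree : LA.Free) (hLproper : LA.Proper)
    (hRfree : RA.Free) (hRproper : RA.Proper)
    (hcomm : ∀ (t : G) (x : Γ) (h : H), LA.act t (RA.act x h) = RA.act (LA.act t x) h)
    -- the semidirect-product groupoid (Γ/H)⋊G
    (SP1 : TopGroupoid (Quotient RA.setoid × G))
    (hSP1unit : SP1.unit = (Quotient.mk RA.setoid '' 𝒢.unit) ×ˢ ({1} : Set G))
    (hSP1rng : ∀ (x : Γ) (t : G),
      SP1.rng (Quotient.mk RA.setoid x, t) = (Quotient.mk RA.setoid (𝒢.rng x), 1))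
    (hSP1src : ∀ (x : Γ) (t : G),
      SP1.src (Quotient.mk RA.setoid x, t) = (Quotient.mk RA.setoid (LA.act t⁻¹ (𝒢.src x)), 1))
    (hSP1mul : ∀ (x y : Γ) (s t : G), 𝒢.src x = 𝒢.rng (LA.act s y) →
      SP1.mul (Quotient.mk RA.setoid x, s) (Quotient.mk RA.setoid y, t)
        = (Quotient.mk RA.setoid (𝒢.mul x (LA.act s y)), s * t))
    -- the semidirect-product groupoid H⋉(G\Γ)
    (SP2 : TopGroupoid (H × Quotient LA.setoid))
    (hSP2unit : SP2.unit = ({1} : Set H) ×ˢ (Quotient.mk LA.setoid '' 𝒢.unit))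
    (hSP2rng : ∀ (h : H) (x : Γ),
      SP2.rng (h, Quotient.mk LA.setoid x)
        = (1, Quotient.mk LA.setoid (RA.act (𝒢.rng x) h⁻¹)))
    (hSP2src : ∀ (h : H) (x : Γ),
      SP2.src (h, Quotient.mk LA.setoid x) = (1, Quotient.mk LA.setoid (𝒢.src x)))
    (hSP2mul : ∀ (s t : H) (x y : Γ), 𝒢.src (RA.act x t) = 𝒢.rng y →
      SP2.mul (s, Quotient.mk LA.setoid x) (t, Quotient.mk LA.setoid y)
        = (s * t, Quotient.mk LA.setoid (𝒢.mul (RA.act x t) y))) :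
    ∃ (LAct : GroupoidLeftAction SP1 Γ) (RAct : GroupoidRightAction SP2 Γ),
      -- (1) the left action of (Γ/H)⋊G
      (∀ y : Γ, LAct.ρ y = (Quotient.mk RA.setoid (𝒢.rng y), 1)) ∧
      (∀ (x : Γ) (t : G) (y : Γ), 𝒢.src x = 𝒢.rng (LA.act t y) →
        LAct.act (Quotient.mk RA.setoid x, t) y = 𝒢.mul x (LA.act t y)) ∧
      LAct.Free ∧ LAct.Proper ∧
      -- (2) the right action of H⋉(G\Γ)
      (∀ y : Γ, RAct.σ y = (1, Quotient.mk LA.setoid (𝒢.src y))) ∧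
      (∀ (y : Γ) (h : H) (z : Γ), 𝒢.src (RA.act y h) = 𝒢.rng z →
        RAct.act y (h, Quotient.mk LA.setoid z) = 𝒢.mul (RA.act y h) z) ∧
      RAct.Free ∧ RAct.Proper ∧
      -- (3) the two actions commute
      (∀ (x : Γ) (t : G) (y : Γ) (h : H) (z : Γ),
        𝒢.src x = 𝒢.rng (LA.act t y) → 𝒢.src (RA.act y h) = 𝒢.rng z →
        RAct.act (LAct.act (Quotient.mk RA.setoid x, t) y) (h, Quotient.mk LA.setoid z)
          = LAct.act (Quotient.mk RA.setoid x, t)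
              (RAct.act y (h, Quotient.mk LA.setoid z))) ∧
      -- (4) ρ factors through a homeomorphism Γ/(H⋉(G\Γ)) ≅ (Γ⁰/H)×{e}
      (∃ φ : Quotient RAct.setoid ≃ₜ
          {p : Quotient RA.setoid × G // p.1 ∈ Quotient.mk RA.setoid '' 𝒢.unit ∧ p.2 = 1},
        ∀ y : Γ, (φ (Quotient.mk RAct.setoid y)).val
          = (Quotient.mk RA.setoid (𝒢.rng y), 1)) ∧
      -- (5) σ factors through a homeomorphism ((Γ/H)⋊G)\Γ ≅ {e}×(G\Γ⁰)
      (∃ ψ : Quotient LAct.setoid ≃ₜ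
          {p : H × Quotient LA.setoid // p.1 = 1 ∧ p.2 ∈ Quotient.mk LA.setoid '' 𝒢.unit},
        ∀ y : Γ, (ψ (Quotient.mk LAct.setoid y)).val
          = (1, Quotient.mk LA.setoid (𝒢.src y))) := by
  have h𝒮₁ : IsLeftSemidirect LA RA SP1 := ⟨hSP1unit, hSP1rng, hSP1src, hSP1mul⟩
  have h𝒮₂ : IsRightSemidirect LA RA SP2 := ⟨hSP2unit, hSP2rng, hSP2src, hSP2mul⟩
  exact ⟨semidirectLeftAction h𝒮₁ hRfree hRproper hcomm,
    semidirectRightAction h𝒮₂ hLfree hLproper hcomm,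
    fun _ => rfl, fun _ _ _ => semidirectLeftAct_mk hRfree,
    h𝒮₁.semidirectLeftAction_free hLfree hRfree hRproper hcomm,
    h𝒮₁.semidirectLeftAction_proper hLproper hRfree hRproper hcomm,
    fun _ => rfl, fun _ _ _ => semidirectRightAct_mk hLfree,
    h𝒮₂.semidirectRightAction_free hRfree hLfree hLproper hcomm,
    h𝒮₂.semidirectRightAction_proper hRproper hLfree hLproper hcomm,
    fun _ _ _ _ _ => semidirectRightAct_semidirectLeftAct hLfree hRfree hcomm,
    h𝒮₂.exists_homeomorph_orbit_semidirectRightAction hLfree hLproper hcomm,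
    h𝒮₁.exists_homeomorph_orbit_semidirectLeftAction hRfree hRproper hcomm⟩

/-- (Groupoid equivalence.) For commuting free and proper actions of `G`
(left) and `H` (right) by automorphisms on a groupoid `Γ`, the space `Γ` is a
`((Γ/H)⋊G)-(H⋉(G\Γ))` equivalence: the two semidirect-product groupoids act freely and
properly on the left and right of `Γ`, the actions commute, and the fibre maps factor
through homeomorphisms of the respective orbit spaces onto `(Γ⁰/H)×{e}` and
`{e}×(G\Γ⁰)`. -/
theorem symmetric_groupoid_equivalence
    {Γ G H : Type*} [TopologicalSpace Γ] [T2Space Γ] [LocallyCompactSpace Γ]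
    [TopologicalSpace G] [Group G] [IsTopologicalGroup G] [T2Space G] [LocallyCompactSpace G]
    [TopologicalSpace H] [Group H] [IsTopologicalGroup H] [T2Space H] [LocallyCompactSpace H]
    (𝒢 : TopGroupoid Γ)
    (LA : GroupLeftAction 𝒢 G) (RA : GroupRightAction 𝒢 H)
    (hLfree : LA.Free) (hLproper : LA.Proper)
    (hRfree : RA.Free) (hRproper : RA.Proper)
    (hcomm : ∀ (t : G) (x : Γ) (h : H), LA.act t (RA.act x h) = RA.act (LA.act t x) h)
    -- the quotient groupoid Γ/H
    (QH : TopGroupoid (Quotient RA.setoid))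
    (hQHunit : QH.unit = Quotient.mk RA.setoid '' 𝒢.unit)
    (hQHrng : ∀ x : Γ, QH.rng (Quotient.mk RA.setoid x) = Quotient.mk RA.setoid (𝒢.rng x))
    (hQHsrc : ∀ x : Γ, QH.src (Quotient.mk RA.setoid x) = Quotient.mk RA.setoid (𝒢.src x))
    (hQHmul : ∀ x y : Γ, 𝒢.src x = 𝒢.rng y →
      QH.mul (Quotient.mk RA.setoid x) (Quotient.mk RA.setoid y)
        = Quotient.mk RA.setoid (𝒢.mul x y))
    (hQHinv : ∀ x : Γ, QH.inv (Quotient.mk RA.setoid x) = Quotient.mk RA.setoid (𝒢.inv x))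
    -- the quotient groupoid G\Γ
    (QG : TopGroupoid (Quotient LA.setoid))
    (hQGunit : QG.unit = Quotient.mk LA.setoid '' 𝒢.unit)
    (hQGrng : ∀ x : Γ, QG.rng (Quotient.mk LA.setoid x) = Quotient.mk LA.setoid (𝒢.rng x))
    (hQGsrc : ∀ x : Γ, QG.src (Quotient.mk LA.setoid x) = Quotient.mk LA.setoid (𝒢.src x))
    (hQGmul : ∀ x y : Γ, 𝒢.src x = 𝒢.rng y →
      QG.mul (Quotient.mk LA.setoid x) (Quotient.mk LA.setoid y)
        = Quotient.mk LA.setoid (𝒢.mul x y))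
    (hQGinv : ∀ x : Γ, QG.inv (Quotient.mk LA.setoid x) = Quotient.mk LA.setoid (𝒢.inv x))
    -- the semidirect-product groupoid (Γ/H)⋊G
    (SP1 : TopGroupoid (Quotient RA.setoid × G))
    (hSP1unit : SP1.unit = (Quotient.mk RA.setoid '' 𝒢.unit) ×ˢ ({1} : Set G))
    (hSP1rng : ∀ (x : Γ) (t : G),
      SP1.rng (Quotient.mk RA.setoid x, t) = (Quotient.mk RA.setoid (𝒢.rng x), 1))
    (hSP1src : ∀ (x : Γ) (t : G),
      SP1.src (Quotient.mk RA.setoid x, t) = (Quotient.mk RA.setoid (LA.act t⁻¹ (𝒢.src x)), 1))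
    (hSP1mul : ∀ (x y : Γ) (s t : G), 𝒢.src x = 𝒢.rng (LA.act s y) →
      SP1.mul (Quotient.mk RA.setoid x, s) (Quotient.mk RA.setoid y, t)
        = (Quotient.mk RA.setoid (𝒢.mul x (LA.act s y)), s * t))
    (hSP1inv : ∀ (x : Γ) (t : G),
      SP1.inv (Quotient.mk RA.setoid x, t)
        = (Quotient.mk RA.setoid (LA.act t⁻¹ (𝒢.inv x)), t⁻¹))
    -- the semidirect-product groupoid H⋉(G\Γ)
    (SP2 : TopGroupoid (H × Quotient LA.setoid))
    (hSP2unit : SP2.unit = ({1} : Set H) ×ˢ (Quotient.mk LA.setoid '' 𝒢.unit))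
    (hSP2rng : ∀ (h : H) (x : Γ),
      SP2.rng (h, Quotient.mk LA.setoid x)
        = (1, Quotient.mk LA.setoid (RA.act (𝒢.rng x) h⁻¹)))
    (hSP2src : ∀ (h : H) (x : Γ),
      SP2.src (h, Quotient.mk LA.setoid x) = (1, Quotient.mk LA.setoid (𝒢.src x)))
    (hSP2mul : ∀ (s t : H) (x y : Γ), 𝒢.src (RA.act x t) = 𝒢.rng y →
      SP2.mul (s, Quotient.mk LA.setoid x) (t, Quotient.mk LA.setoid y)
        = (s * t, Quotient.mk LA.setoid (𝒢.mul (RA.act x t) y)))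
    (hSP2inv : ∀ (h : H) (x : Γ),
      SP2.inv (h, Quotient.mk LA.setoid x)
        = (h⁻¹, Quotient.mk LA.setoid (RA.act (𝒢.inv x) h⁻¹))) :
    ∃ (LAct : GroupoidLeftAction SP1 Γ) (RAct : GroupoidRightAction SP2 Γ),
      -- (1) the left action of (Γ/H)⋊G
      (∀ y : Γ, LAct.ρ y = (Quotient.mk RA.setoid (𝒢.rng y), 1)) ∧
      (∀ (x : Γ) (t : G) (y : Γ), 𝒢.src x = 𝒢.rng (LA.act t y) →
        LAct.act (Quotient.mk RA.setoid x, t) y = 𝒢.mul x (LA.act t y)) ∧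
      LAct.Free ∧ LAct.Proper ∧
      -- (2) the right action of H⋉(G\Γ)
      (∀ y : Γ, RAct.σ y = (1, Quotient.mk LA.setoid (𝒢.src y))) ∧
      (∀ (y : Γ) (h : H) (z : Γ), 𝒢.src (RA.act y h) = 𝒢.rng z →
        RAct.act y (h, Quotient.mk LA.setoid z) = 𝒢.mul (RA.act y h) z) ∧
      RAct.Free ∧ RAct.Proper ∧
      -- (3) the two actions commute
      (∀ (x : Γ) (t : G) (y : Γ) (h : H) (z : Γ),
        𝒢.src x = 𝒢.rng (LA.act t y) → 𝒢.src (RA.act y h) = 𝒢.rng z →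
        RAct.act (LAct.act (Quotient.mk RA.setoid x, t) y) (h, Quotient.mk LA.setoid z)
          = LAct.act (Quotient.mk RA.setoid x, t)
              (RAct.act y (h, Quotient.mk LA.setoid z))) ∧
      -- (4) ρ factors through a homeomorphism Γ/(H⋉(G\Γ)) ≅ (Γ⁰/H)×{e}
      (∃ φ : Quotient RAct.setoid ≃ₜ
          {p : Quotient RA.setoid × G // p.1 ∈ Quotient.mk RA.setoid '' 𝒢.unit ∧ p.2 = 1},
        ∀ y : Γ, (φ (Quotient.mk RAct.setoid y)).val
          = (Quotient.mk RA.setoid (𝒢.rng y), 1)) ∧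
      -- (5) σ factors through a homeomorphism ((Γ/H)⋊G)\Γ ≅ {e}×(G\Γ⁰)
      (∃ ψ : Quotient LAct.setoid ≃ₜ
          {p : H × Quotient LA.setoid // p.1 = 1 ∧ p.2 ∈ Quotient.mk LA.setoid '' 𝒢.unit},
        ∀ y : Γ, (ψ (Quotient.mk LAct.setoid y)).val
          = (1, Quotient.mk LA.setoid (𝒢.src y))) :=
  symmetric_groupoid_equivalence_general 𝒢 LA RA hLfree hLproper hRfree hRproper hcomm SP1 hSP1unit
    hSP1rng hSP1src hSP1mul SP2 hSP2unit hSP2rng hSP2src hSP2mul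
end

section
/- Let H be a locally compact Hausdorff topological group acting continuously on the right of a locally compact Hausdorff space Ω, freely (u·h = u implies h = e) and properly (the map Ω × H → Ω × Ω, (u,h) ↦ (u·h, u), is proper). Let u ∈ Ω, and suppose (uᵢ) is a net in Ω and (hᵢ) a net in H, indexed by the same directed set, such that uᵢ → u and uᵢ·hᵢ → u. Then hᵢ → e in H. -/
open Filter Topology

/-!
Choose a compact neighbourhood `K` of `u`. Eventually both `uᵢ` and `uᵢ·hᵢ` lie in `K`, so by
properness the `hᵢ` eventually lie in the compact set of `g` with `K·g ∩ K ≠ ∅`. Hence it suffices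
to show that every cluster point `g` of `(hᵢ)` is `e`; along a subnet converging to `g`,
continuity gives `uᵢ·hᵢ → u·g`, so `u·g = u` and freeness gives `g = e`.
-/

theorem MapClusterPt.prodMk_of_tendsto {α X Y : Type*} [TopologicalSpace X] [TopologicalSpace Y]
    {l : Filter α} {f : α → X} {g : α → Y} {x : X} {y : Y}
    (hf : Tendsto f l (𝓝 x)) (hg : MapClusterPt y l g) :
    MapClusterPt (x, y) l fun i => (f i, g i) := by
  rw [mapClusterPt_iff_frequently]
  intro s hs
  obtain ⟨U, hU, V, hV, hUV⟩ := mem_nhds_prod_iff.mp hs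
  exact ((hf.eventually_mem hU).and_frequently (hg.frequently hV)).mono
    fun i hi => hUV ⟨hi.1, hi.2⟩

theorem MapClusterPt.eq_of_tendsto {α X : Type*} [TopologicalSpace X] [T2Space X]
    {l : Filter α} {f : α → X} {x y : X} (hx : MapClusterPt x l f) (hy : Tendsto f l (𝓝 y)) :
    x = y :=
  eq_of_nhds_neBot (hx.clusterPt.mono hy)

section Action

variable {Ω H : Type*} [TopologicalSpace Ω] [TopologicalSpace H] (act : Ω → H → Ω)

theorem isCompact_setOf_exists_act_mem
    (hproper : ∀ K : Set (Ω × Ω), IsCompact K →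
      IsCompact {p : Ω × H | (act p.1 p.2, p.1) ∈ K})
    {K : Set Ω} (hK : IsCompact K) : IsCompact {g : H | ∃ x ∈ K, act x g ∈ K} := by
  have himage : Prod.snd '' {p : Ω × H | (act p.1 p.2, p.1) ∈ K ×ˢ K} =
      {g : H | ∃ x ∈ K, act x g ∈ K} := by
    ext g
    simp only [Set.mem_image, Set.mem_ofPred_eq, Set.mem_prod, Prod.exists, exists_eq_right]
    exact exists_congr fun x => and_comm
  exact himage ▸ (hproper _ (hK.prod hK)).image continuous_snd

theorem act_eq_of_mapClusterPt [T2Space Ω] {α : Type*} {l : Filter α} {u : α → Ω} {h : α → H}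
    {x y : Ω} {g : H} (hcont : Continuous fun p : Ω × H => act p.1 p.2)
    (hu : Tendsto u l (𝓝 x)) (huh : Tendsto (fun i => act (u i) (h i)) l (𝓝 y))
    (hg : MapClusterPt g l h) : act x g = y :=
  ((hg.prodMk_of_tendsto hu).continuousAt_comp hcont.continuousAt).eq_of_tendsto huh

end Action

theorem net_convergence_of_free_proper_action_general
    {Ω H : Type*} [TopologicalSpace Ω] [T2Space Ω] [LocallyCompactSpace Ω]
    [TopologicalSpace H] [Group H]
    (act : Ω → H → Ω)
    (hcont : Continuous fun p : Ω × H => act p.1 p.2)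
    (hfree : ∀ u h, act u h = u → h = 1)
    (hproper : ∀ K : Set (Ω × Ω), IsCompact K →
      IsCompact {p : Ω × H | (act p.1 p.2, p.1) ∈ K})
    {ι : Type*} (l : Filter ι) (u : ι → Ω) (h : ι → H) (p : Ω)
    (hu : Filter.Tendsto u l (nhds p))
    (huh : Filter.Tendsto (fun i => act (u i) (h i)) l (nhds p)) :
    Filter.Tendsto h l (nhds (1 : H)) := by
  obtain ⟨K, hK, hKp⟩ := exists_compact_mem_nhds p
  have hmem : ∀ᶠ i in l, h i ∈ {g : H | ∃ x ∈ K, act x g ∈ K} := by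
    filter_upwards [hu hKp, huh hKp] with i hui huhi
    exact ⟨u i, hui, huhi⟩
  exact (isCompact_setOf_exists_act_mem act hproper hK).tendsto_nhds_of_unique_mapClusterPt hmem
    fun g _ hg => hfree p g (act_eq_of_mapClusterPt act hcont hu huh hg)

/-- If a locally compact group `H` acts freely and properly on a locally
compact Hausdorff space `Ω`, and nets `uᵢ → u`, `uᵢ·hᵢ → u`, then `hᵢ → e`. -/
theorem net_convergence_of_free_proper_action
    {Ω H : Type*} [TopologicalSpace Ω] [T2Space Ω] [LocallyCompactSpace Ω]
    [TopologicalSpace H] [Group H] [IsTopologicalGroup H] [T2Space H] [LocallyCompactSpace H]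
    (act : Ω → H → Ω)
    (hcont : Continuous fun p : Ω × H => act p.1 p.2)
    (hone : ∀ u, act u 1 = u)
    (hmul : ∀ u (h k : H), act (act u h) k = act u (h * k))
    (hfree : ∀ u h, act u h = u → h = 1)
    (hproper : ∀ K : Set (Ω × Ω), IsCompact K →
      IsCompact {p : Ω × H | (act p.1 p.2, p.1) ∈ K})
    {ι : Type*} (l : Filter ι) [l.NeBot] (u : ι → Ω) (h : ι → H) (p : Ω)
    (hu : Filter.Tendsto u l (nhds p))
    (huh : Filter.Tendsto (fun i => act (u i) (h i)) l (nhds p)) :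
    Filter.Tendsto h l (nhds (1 : H)) :=
  net_convergence_of_free_proper_action_general act hcont hfree hproper l u h p hu huh
end
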